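/- arXiv:2103.09735 — 2 statements merged into one kernel-verified Lean document; each statement's English description precedes it below -/
import Mathlib

section
/- If a set I' of long rectangles (each of width > N/2 or height > N/2) admits a k-stage packing into an N×N knapsack, then I' admits a guillotine-separable container packing of the same knapsack that uses at most k containers. -/
/-- An axis-aligned rectangle, given by the coordinates of its corners. -/
structure Rect where
  x1 : ℝ
  x2 : ℝ
  y1 : ℝ
  y2 : ℝ

namespace Rect

def width (r : Rect) : ℝ := r.x2 - r.x1

def height (r : Rect) : ℝ := r.y2 - r.y1

def area (r : Rect) : ℝ := r.width * r.height

/-- The open interior of an axis-aligned rectangle. -/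
def toSet (r : Rect) : Set (ℝ × ℝ) :=
  {p : ℝ × ℝ | r.x1 < p.1 ∧ p.1 < r.x2 ∧ r.y1 < p.2 ∧ p.2 < r.y2}

/-- `r.SubRect s` : the rectangle `r` is contained in the rectangle `s`. -/
def SubRect (r s : Rect) : Prop :=
  s.x1 ≤ r.x1 ∧ r.x2 ≤ s.x2 ∧ s.y1 ≤ r.y1 ∧ r.y2 ≤ s.y2

noncomputable instance (r s : Rect) : Decidable (r.SubRect s) :=
  inferInstanceAs (Decidable (s.x1 ≤ r.x1 ∧ r.x2 ≤ s.x2 ∧ s.y1 ≤ r.y1 ∧ r.y2 ≤ s.y2))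

end Rect

/-- The square knapsack `[0,N] × [0,N]`. -/
def knapsack (N : ℝ) : Rect := ⟨0, N, 0, N⟩

/-- A placement of the items of `S` (with prescribed widths and heights) as
pairwise non-overlapping axis-aligned rectangles inside the piece `P`. -/
structure IsPacking {ι : Type*} (wd ht : ι → ℝ) (S : Finset ι)
    (place : ι → Rect) (P : Rect) : Prop where
  hw : ∀ i ∈ S, (place i).width = wd i
  hh : ∀ i ∈ S, (place i).height = ht i
  hin : ∀ i ∈ S, (place i).SubRect P
  hdisj : ∀ i ∈ S, ∀ j ∈ S, i ≠ j → Disjoint (place i).toSet (place j).toSet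

/-- Guillotine separability of the placed items of `S` inside the piece `P`:
either the piece contains at most one item, or some axis-parallel end-to-end cut
splits the piece into two rectangular subpieces, crossing the interior of no item,
and the items of each subpiece are recursively guillotine separable. -/
inductive GuillotineSep {ι : Type*} (place : ι → Rect) : Rect → Finset ι → Prop
  | base (P : Rect) (S : Finset ι) (hS : S.card ≤ 1) : GuillotineSep place P S
  | vcut (P : Rect) (S : Finset ι) (c : ℝ) (h1 : P.x1 < c) (h2 : c < P.x2)
      (hcross : ∀ i ∈ S, (place i).x2 ≤ c ∨ c ≤ (place i).x1)
      (hL : GuillotineSep place ⟨P.x1, c, P.y1, P.y2⟩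
              (S.filter fun i => (place i).x2 ≤ c))
      (hR : GuillotineSep place ⟨c, P.x2, P.y1, P.y2⟩
              (S.filter fun i => ¬ (place i).x2 ≤ c)) :
      GuillotineSep place P S
  | hcut (P : Rect) (S : Finset ι) (c : ℝ) (h1 : P.y1 < c) (h2 : c < P.y2)
      (hcross : ∀ i ∈ S, (place i).y2 ≤ c ∨ c ≤ (place i).y1)
      (hB : GuillotineSep place ⟨P.x1, P.x2, P.y1, c⟩
              (S.filter fun i => (place i).y2 ≤ c))
      (hT : GuillotineSep place ⟨P.x1, P.x2, c, P.y2⟩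
              (S.filter fun i => ¬ (place i).y2 ≤ c)) :
      GuillotineSep place P S

/-- A guillotine-separable packing of the items of `S` into the piece `P`. -/
def GuillotinePacking {ι : Type*} (wd ht : ι → ℝ) (S : Finset ι)
    (place : ι → Rect) (P : Rect) : Prop :=
  IsPacking wd ht S place P ∧ GuillotineSep place P S

/-- `StageSep place s d P S` : the items of `S` can be separated from the piece `P`
by a guillotine cutting sequence using at most `s` stages, where every stage consists
of parallel cuts only (vertical if the Boolean direction is `true`, horizontal
otherwise) and the first used stage has direction `d`; a subpiece containing at most
one item needs no further cuts (this accounts for the final trimming cut). -/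
inductive StageSep {ι : Type*} (place : ι → Rect) : ℕ → Bool → Rect → Finset ι → Prop
  | base (s : ℕ) (d : Bool) (P : Rect) (S : Finset ι) (hS : S.card ≤ 1) :
      StageSep place s d P S
  | vcut (s : ℕ) (P : Rect) (S : Finset ι) (c : ℝ) (h1 : P.x1 < c) (h2 : c < P.x2)
      (hcross : ∀ i ∈ S, (place i).x2 ≤ c ∨ c ≤ (place i).x1)
      (hL : StageSep place (s + 1) true ⟨P.x1, c, P.y1, P.y2⟩
              (S.filter fun i => (place i).x2 ≤ c))
      (hR : StageSep place (s + 1) true ⟨c, P.x2, P.y1, P.y2⟩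
              (S.filter fun i => ¬ (place i).x2 ≤ c)) :
      StageSep place (s + 1) true P S
  | hcut (s : ℕ) (P : Rect) (S : Finset ι) (c : ℝ) (h1 : P.y1 < c) (h2 : c < P.y2)
      (hcross : ∀ i ∈ S, (place i).y2 ≤ c ∨ c ≤ (place i).y1)
      (hB : StageSep place (s + 1) false ⟨P.x1, P.x2, P.y1, c⟩
              (S.filter fun i => (place i).y2 ≤ c))
      (hT : StageSep place (s + 1) false ⟨P.x1, P.x2, c, P.y2⟩
              (S.filter fun i => ¬ (place i).y2 ≤ c)) :
      StageSep place (s + 1) false P S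
  | skip (s : ℕ) (d : Bool) (P : Rect) (S : Finset ι)
      (h : StageSep place s d P S) : StageSep place (s + 1) (!d) P S

/-- The placed items of `S` admit an (at most) `k`-stage guillotine cutting sequence
from the piece `P`. -/
def KStageSep {ι : Type*} (place : ι → Rect) (k : ℕ) (P : Rect) (S : Finset ι) : Prop :=
  ∃ d : Bool, StageSep place k d P S

/-- Labels of containers. -/
inductive CLabel
  | large
  | horizontal
  | vertical
  | area

/-- The constraints of a container packing: a large container contains a single item,
in a horizontal container the items are stacked one above another, in a vertical
container the items are placed side by side, and every item placed in an area
container has width (resp. height) at most an `ε`-fraction of the container's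
width (resp. height). -/
def ContainerLabelOK {ι : Type*} (T : Finset ι) (place : ι → Rect)
    (k : ℕ) (cont : ℕ → Rect) (lab : ℕ → CLabel) (asg : ι → ℕ) (ε : ℝ) : Prop :=
  (∀ j < k, lab j = CLabel.large →
      ∀ i ∈ T, ∀ i' ∈ T, asg i = j → asg i' = j → i = i') ∧
  (∀ j < k, lab j = CLabel.horizontal →
      ∀ i ∈ T, ∀ i' ∈ T, asg i = j → asg i' = j → i ≠ i' →
        (place i).y2 ≤ (place i').y1 ∨ (place i').y2 ≤ (place i).y1) ∧
  (∀ j < k, lab j = CLabel.vertical →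
      ∀ i ∈ T, ∀ i' ∈ T, asg i = j → asg i' = j → i ≠ i' →
        (place i).x2 ≤ (place i').x1 ∨ (place i').x2 ≤ (place i).x1) ∧
  (∀ j < k, lab j = CLabel.area → ∀ i ∈ T, asg i = j →
      (place i).width ≤ ε * (cont j).width ∧ (place i).height ≤ ε * (cont j).height)
namespace KS

open Rect

/-- Transpose a rectangle (swap the two axes). -/
def tr (r : Rect) : Rect := ⟨r.y1, r.y2, r.x1, r.x2⟩

/-- Horizontal shift. -/
def xsh (a : ℝ) (r : Rect) : Rect := ⟨r.x1 + a, r.x2 + a, r.y1, r.y2⟩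

@[simp] lemma tr_x1 (r : Rect) : (tr r).x1 = r.y1 := rfl
@[simp] lemma tr_x2 (r : Rect) : (tr r).x2 = r.y2 := rfl
@[simp] lemma tr_y1 (r : Rect) : (tr r).y1 = r.x1 := rfl
@[simp] lemma tr_y2 (r : Rect) : (tr r).y2 = r.x2 := rfl
@[simp] lemma tr_tr (r : Rect) : tr (tr r) = r := rfl
@[simp] lemma tr_width (r : Rect) : (tr r).width = r.height := rfl
@[simp] lemma tr_height (r : Rect) : (tr r).height = r.width := rfl
@[simp] lemma xsh_x1 (a : ℝ) (r : Rect) : (xsh a r).x1 = r.x1 + a := rfl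
@[simp] lemma xsh_x2 (a : ℝ) (r : Rect) : (xsh a r).x2 = r.x2 + a := rfl
@[simp] lemma xsh_y1 (a : ℝ) (r : Rect) : (xsh a r).y1 = r.y1 := rfl
@[simp] lemma xsh_y2 (a : ℝ) (r : Rect) : (xsh a r).y2 = r.y2 := rfl
@[simp] lemma xsh_width (a : ℝ) (r : Rect) : (xsh a r).width = r.width := by
  simp [Rect.width, xsh]
@[simp] lemma xsh_height (a : ℝ) (r : Rect) : (xsh a r).height = r.height := rfl

lemma toSet_tr (r : Rect) : (tr r).toSet = Prod.swap ⁻¹' r.toSet := by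
  ext p; simp only [tr, Rect.toSet, Set.mem_setOf_eq, Set.mem_preimage, Prod.fst_swap,
    Prod.snd_swap]; tauto

lemma toSet_xsh (a : ℝ) (r : Rect) :
    (xsh a r).toSet = (fun p : ℝ × ℝ => (p.1 - a, p.2)) ⁻¹' r.toSet := by
  ext p; simp only [xsh, Rect.toSet, Set.mem_setOf_eq, Set.mem_preimage]
  constructor <;> rintro ⟨h1, h2, h3, h4⟩ <;> refine ⟨by linarith, by linarith, h3, h4⟩

lemma disjoint_tr {r s : Rect} (h : Disjoint r.toSet s.toSet) :
    Disjoint (tr r).toSet (tr s).toSet := by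
  rw [toSet_tr, toSet_tr]; exact Disjoint.preimage _ h

lemma disjoint_xsh {r s : Rect} (a : ℝ) (h : Disjoint r.toSet s.toSet) :
    Disjoint (xsh a r).toSet (xsh a s).toSet := by
  rw [toSet_xsh, toSet_xsh]; exact Disjoint.preimage _ h

lemma subrect_tr {r s : Rect} (h : r.SubRect s) : (tr r).SubRect (tr s) := by
  obtain ⟨a, b, c, d⟩ := h; exact ⟨c, d, a, b⟩

lemma subrect_xsh {r s : Rect} (a : ℝ) (h : r.SubRect s) :
    (xsh a r).SubRect (xsh a s) := by
  obtain ⟨h1, h2, h3, h4⟩ := h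
  exact ⟨by simpa using h1, by simpa using h2, h3, h4⟩

lemma subrect_trans {r s u : Rect} (h1 : r.SubRect s) (h2 : s.SubRect u) : r.SubRect u := by
  obtain ⟨a, b, c, d⟩ := h1; obtain ⟨a', b', c', d'⟩ := h2
  exact ⟨le_trans a' a, le_trans b b', le_trans c' c, le_trans d d'⟩

lemma toSet_mono {r s : Rect} (h : r.SubRect s) : r.toSet ⊆ s.toSet := by
  obtain ⟨a, b, c, d⟩ := h
  intro p hp; obtain ⟨h1, h2, h3, h4⟩ := hp
  exact ⟨lt_of_le_of_lt a h1, lt_of_lt_of_le h2 b, lt_of_le_of_lt c h3, lt_of_lt_of_le h4 d⟩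

lemma toSet_empty {r : Rect} (h : r.x2 ≤ r.x1) : r.toSet = ∅ := by
  ext p; simp only [Rect.toSet, Set.mem_setOf_eq, Set.mem_empty_iff_false, iff_false]
  rintro ⟨h1, h2, -, -⟩; linarith

lemma disjoint_toSet_x {r s : Rect} (h : r.x2 ≤ s.x1) : Disjoint r.toSet s.toSet := by
  rw [Set.disjoint_left]; rintro p ⟨-, h2, -, -⟩ ⟨h1', -, -, -⟩; linarith

lemma disjoint_toSet_y {r s : Rect} (h : r.y2 ≤ s.y1) : Disjoint r.toSet s.toSet := by
  rw [Set.disjoint_left]; rintro p ⟨-, -, -, h2⟩ ⟨-, -, h1', -⟩; linarith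

end KS
namespace KS

/-- Swap the vertical/horizontal labels. -/
def swapLab : CLabel → CLabel
  | .large => .large
  | .horizontal => .vertical
  | .vertical => .horizontal
  | .area => .area

@[simp] lemma swapLab_eq_large {l : CLabel} : swapLab l = CLabel.large ↔ l = CLabel.large := by
  cases l <;> simp [swapLab]
@[simp] lemma swapLab_eq_horizontal {l : CLabel} :
    swapLab l = CLabel.horizontal ↔ l = CLabel.vertical := by cases l <;> simp [swapLab]
@[simp] lemma swapLab_eq_vertical {l : CLabel} :
    swapLab l = CLabel.vertical ↔ l = CLabel.horizontal := by cases l <;> simp [swapLab]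
@[simp] lemma swapLab_eq_area {l : CLabel} : swapLab l = CLabel.area ↔ l = CLabel.area := by
  cases l <;> simp [swapLab]

variable {ι : Type*}

lemma packing_tr {wd ht : ι → ℝ} {S : Finset ι} {q : ι → Rect} {P : Rect}
    (h : IsPacking wd ht S q P) : IsPacking ht wd S (fun i => tr (q i)) (tr P) := by
  refine ⟨fun i hi => by simpa using h.hh i hi, fun i hi => by simpa using h.hw i hi,
    fun i hi => subrect_tr (h.hin i hi), fun i hi j hj hij => disjoint_tr (h.hdisj i hi j hj hij)⟩

lemma packing_xsh {wd ht : ι → ℝ} {S : Finset ι} {q : ι → Rect} {P : Rect} (a : ℝ)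
    (h : IsPacking wd ht S q P) : IsPacking wd ht S (fun i => xsh a (q i)) (xsh a P) := by
  refine ⟨fun i hi => by simpa using h.hw i hi, fun i hi => by simpa using h.hh i hi,
    fun i hi => subrect_xsh a (h.hin i hi), fun i hi j hj hij => disjoint_xsh a (h.hdisj i hi j hj hij)⟩

lemma gs_congr {q q' : ι → Rect} {P : Rect} {S : Finset ι}
    (h : GuillotineSep q P S) (he : ∀ i ∈ S, q' i = q i) : GuillotineSep q' P S := by
  induction h with
  | base P S hS => exact .base P S hS
  | vcut P S c h1 h2 hcross hL hR ihL ihR =>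
    have hf : ∀ p ∈ S, ((q' p).x2 ≤ c) = ((q p).x2 ≤ c) := fun p hp => by rw [he p hp]
    refine .vcut P S c h1 h2 (fun i hi => by rw [he i hi]; exact hcross i hi) ?_ ?_
    · rw [Finset.filter_congr (fun p hp => by rw [he p hp])]
      exact ihL fun i hi => he i (Finset.mem_of_mem_filter i hi)
    · rw [Finset.filter_congr (fun p hp => by rw [he p hp])]
      exact ihR fun i hi => he i (Finset.mem_of_mem_filter i hi)
  | hcut P S c h1 h2 hcross hB hT ihB ihT =>
    refine .hcut P S c h1 h2 (fun i hi => by rw [he i hi]; exact hcross i hi) ?_ ?_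
    · rw [Finset.filter_congr (fun p hp => by rw [he p hp])]
      exact ihB fun i hi => he i (Finset.mem_of_mem_filter i hi)
    · rw [Finset.filter_congr (fun p hp => by rw [he p hp])]
      exact ihT fun i hi => he i (Finset.mem_of_mem_filter i hi)

lemma gs_tr {q : ι → Rect} {P : Rect} {S : Finset ι}
    (h : GuillotineSep q P S) : GuillotineSep (fun i => tr (q i)) (tr P) S := by
  induction h with
  | base P S hS => exact .base _ S hS
  | vcut P S c h1 h2 hcross hL hR ihL ihR =>
    exact .hcut (tr P) S c h1 h2 (fun i hi => hcross i hi) ihL ihR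
  | hcut P S c h1 h2 hcross hB hT ihB ihT =>
    exact .vcut (tr P) S c h1 h2 (fun i hi => hcross i hi) ihB ihT

lemma gs_xsh {q : ι → Rect} {P : Rect} {S : Finset ι} (a : ℝ)
    (h : GuillotineSep q P S) : GuillotineSep (fun i => xsh a (q i)) (xsh a P) S := by
  induction h with
  | base P S hS => exact .base _ S hS
  | vcut P S c h1 h2 hcross hL hR ihL ihR =>
    refine .vcut (xsh a P) S (c + a) (by simpa using h1) (by simpa using h2)
      (fun i hi => by rcases hcross i hi with h' | h' <;> [left; right] <;> simpa) ?_ ?_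
    · have : S.filter (fun i => (xsh a (q i)).x2 ≤ c + a) =
          S.filter (fun i => (q i).x2 ≤ c) := by
        apply Finset.filter_congr; intro p hp; simp
      rw [show (⟨(xsh a P).x1, c + a, (xsh a P).y1, (xsh a P).y2⟩ : Rect) =
        xsh a ⟨P.x1, c, P.y1, P.y2⟩ from rfl, this]; exact ihL
    · have : S.filter (fun i => ¬(xsh a (q i)).x2 ≤ c + a) =
          S.filter (fun i => ¬(q i).x2 ≤ c) := by
        apply Finset.filter_congr; intro p hp; simp
      rw [show (⟨c + a, (xsh a P).x2, (xsh a P).y1, (xsh a P).y2⟩ : Rect) =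
        xsh a ⟨c, P.x2, P.y1, P.y2⟩ from rfl, this]; exact ihR
  | hcut P S c h1 h2 hcross hB hT ihB ihT =>
    refine .hcut (xsh a P) S c h1 h2 (fun i hi => hcross i hi) ?_ ?_
    · rw [show (⟨(xsh a P).x1, (xsh a P).x2, (xsh a P).y1, c⟩ : Rect) =
        xsh a ⟨P.x1, P.x2, P.y1, c⟩ from rfl]; exact ihB
    · rw [show (⟨(xsh a P).x1, (xsh a P).x2, c, (xsh a P).y2⟩ : Rect) =
        xsh a ⟨P.x1, P.x2, c, P.y2⟩ from rfl]; exact ihT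

lemma stage_tr {q : ι → Rect} {s : ℕ} {d : Bool} {P : Rect} {S : Finset ι}
    (h : StageSep q s d P S) : StageSep (fun i => tr (q i)) s (!d) (tr P) S := by
  induction h with
  | base s d P S hS => exact .base s (!d) _ S hS
  | vcut s P S c h1 h2 hcross hL hR ihL ihR =>
    exact .hcut s (tr P) S c h1 h2 (fun i hi => hcross i hi) ihL ihR
  | hcut s P S c h1 h2 hcross hB hT ihB ihT =>
    exact .vcut s (tr P) S c h1 h2 (fun i hi => hcross i hi) ihB ihT
  | skip s d P S h ih => exact .skip s (!d) (tr P) S ih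

lemma stage0 {q : ι → Rect} {d : Bool} {P : Rect} {S : Finset ι}
    (h : StageSep q 0 d P S) : S.card ≤ 1 := by
  cases h with
  | base _ _ _ _ hS => exact hS

end KS
namespace KS

variable {ι : Type*}

/-- Any two distinct items in a stage-separable packing are separated by some cut
strictly inside the piece. -/
lemma sep_local {q : ι → Rect} {s : ℕ} {d : Bool} {P : Rect} {S : Finset ι}
    (h : StageSep q s d P S) :
    ∀ i ∈ S, ∀ j ∈ S, i ≠ j →
      (∃ c, P.x1 < c ∧ c < P.x2 ∧
        ((q i).x2 ≤ c ∧ c ≤ (q j).x1 ∧ c < (q j).x2 ∨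
         (q j).x2 ≤ c ∧ c ≤ (q i).x1 ∧ c < (q i).x2)) ∨
      (∃ c, P.y1 < c ∧ c < P.y2 ∧
        ((q i).y2 ≤ c ∧ c ≤ (q j).y1 ∧ c < (q j).y2 ∨
         (q j).y2 ≤ c ∧ c ≤ (q i).y1 ∧ c < (q i).y2)) := by
  induction h with
  | base s d P S hS =>
    intro i hi j hj hij
    exact absurd (Finset.card_le_one.mp hS i hi j hj) hij
  | vcut s P S c h1 h2 hcross hL hR ihL ihR =>
    intro i hi j hj hij
    by_cases hic : (q i).x2 ≤ c <;> by_cases hjc : (q j).x2 ≤ c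
    · rcases ihL i (Finset.mem_filter.mpr ⟨hi, hic⟩) j (Finset.mem_filter.mpr ⟨hj, hjc⟩) hij
        with ⟨c', hc1, hc2, hc3⟩ | ⟨c', hc1, hc2, hc3⟩
      · exact Or.inl ⟨c', hc1, lt_trans hc2 h2, hc3⟩
      · exact Or.inr ⟨c', hc1, hc2, hc3⟩
    · refine Or.inl ⟨c, h1, h2, Or.inl ⟨hic, ?_, lt_of_not_ge hjc⟩⟩
      rcases hcross j hj with h' | h'
      · exact absurd h' hjc
      · exact h'
    · refine Or.inl ⟨c, h1, h2, Or.inr ⟨hjc, ?_, lt_of_not_ge hic⟩⟩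
      rcases hcross i hi with h' | h'
      · exact absurd h' hic
      · exact h'
    · rcases ihR i (Finset.mem_filter.mpr ⟨hi, hic⟩) j (Finset.mem_filter.mpr ⟨hj, hjc⟩) hij
        with ⟨c', hc1, hc2, hc3⟩ | ⟨c', hc1, hc2, hc3⟩
      · exact Or.inl ⟨c', lt_trans h1 hc1, hc2, hc3⟩
      · exact Or.inr ⟨c', hc1, hc2, hc3⟩
  | hcut s P S c h1 h2 hcross hB hT ihB ihT =>
    intro i hi j hj hij
    by_cases hic : (q i).y2 ≤ c <;> by_cases hjc : (q j).y2 ≤ c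
    · rcases ihB i (Finset.mem_filter.mpr ⟨hi, hic⟩) j (Finset.mem_filter.mpr ⟨hj, hjc⟩) hij
        with ⟨c', hc1, hc2, hc3⟩ | ⟨c', hc1, hc2, hc3⟩
      · exact Or.inl ⟨c', hc1, hc2, hc3⟩
      · exact Or.inr ⟨c', hc1, lt_trans hc2 h2, hc3⟩
    · refine Or.inr ⟨c, h1, h2, Or.inl ⟨hic, ?_, lt_of_not_ge hjc⟩⟩
      rcases hcross j hj with h' | h'
      · exact absurd h' hjc
      · exact h'
    · refine Or.inr ⟨c, h1, h2, Or.inr ⟨hjc, ?_, lt_of_not_ge hic⟩⟩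
      rcases hcross i hi with h' | h'
      · exact absurd h' hic
      · exact h'
    · rcases ihT i (Finset.mem_filter.mpr ⟨hi, hic⟩) j (Finset.mem_filter.mpr ⟨hj, hjc⟩) hij
        with ⟨c', hc1, hc2, hc3⟩ | ⟨c', hc1, hc2, hc3⟩
      · exact Or.inl ⟨c', hc1, hc2, hc3⟩
      · exact Or.inr ⟨c', lt_trans h1 hc1, hc2, hc3⟩
  | skip s d P S h ih => exact ih

/-- A family of items that are strictly separated by vertical lines is
guillotine separable. -/
lemma gsv {p : ι → Rect} : ∀ (n : ℕ) (T : Finset ι) (P : Rect), T.card ≤ n →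
    (∀ i ∈ T, (p i).x2 ≤ P.x2) →
    (∀ i ∈ T, ∀ j ∈ T, i ≠ j → ∃ c, P.x1 < c ∧
      ((p i).x2 ≤ c ∧ c ≤ (p j).x1 ∧ c < (p j).x2 ∨
       (p j).x2 ≤ c ∧ c ≤ (p i).x1 ∧ c < (p i).x2)) →
    GuillotineSep p P T := by
  intro n
  induction n with
  | zero =>
    intro T P hT _ _
    exact .base P T (le_trans hT (by norm_num))
  | succ n ih =>
    intro T P hT hub hpair
    classical
    by_cases hT1 : T.card ≤ 1
    · exact .base P T hT1
    push_neg at hT1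
    have hne : T.Nonempty := Finset.card_pos.mp (by omega)
    obtain ⟨i1, hi1, hmin⟩ := Finset.exists_min_image T (fun i => (p i).x2) hne
    have hern : (T.erase i1).Nonempty := by
      rw [← Finset.card_pos, Finset.card_erase_of_mem hi1]; omega
    have Hj : ∀ j, ∃ cc, j ∈ T.erase i1 →
        P.x1 < cc ∧ (p i1).x2 ≤ cc ∧ cc ≤ (p j).x1 ∧ cc < (p j).x2 := by
      intro j
      by_cases hj : j ∈ T.erase i1
      · obtain ⟨hjne, hjT⟩ := Finset.mem_erase.mp hj
        obtain ⟨c, hc1, hc2⟩ := hpair i1 hi1 j hjT (Ne.symm hjne)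
        rcases hc2 with ⟨a, b, cc⟩ | ⟨a, b, cc⟩
        · exact ⟨c, fun _ => ⟨hc1, a, b, cc⟩⟩
        · exact absurd (hmin j hjT) (by push_neg; linarith)
      · exact ⟨0, fun h => absurd h hj⟩
    choose g hg using Hj
    set cstar := (T.erase i1).inf' hern g with hcstar
    have hlow : P.x1 < cstar := by
      rw [hcstar, Finset.lt_inf'_iff]; exact fun j hj => (hg j hj).1
    have hi1le : (p i1).x2 ≤ cstar := by
      rw [hcstar, Finset.le_inf'_iff]; exact fun j hj => (hg j hj).2.1
    have hcx1 : ∀ j ∈ T.erase i1, cstar ≤ (p j).x1 :=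
      fun j hj => le_trans (Finset.inf'_le g hj) (hg j hj).2.2.1
    have hcx2 : ∀ j ∈ T.erase i1, cstar < (p j).x2 :=
      fun j hj => lt_of_le_of_lt (Finset.inf'_le g hj) (hg j hj).2.2.2
    obtain ⟨j0, hj0⟩ := hern
    have hupp : cstar < P.x2 :=
      lt_of_lt_of_le (hcx2 j0 hj0) (hub j0 (Finset.mem_of_mem_erase hj0))
    refine .vcut P T cstar hlow hupp ?_ ?_ ?_
    · intro i hi
      by_cases hii : i = i1
      · subst hii; exact Or.inl hi1le
      · exact Or.inr (hcx1 i (Finset.mem_erase.mpr ⟨hii, hi⟩))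
    · refine .base _ _ (Finset.card_le_one.mpr ?_)
      intro a ha b hb
      have haa : ∀ x, x ∈ T.filter (fun i => (p i).x2 ≤ cstar) → x = i1 := by
        intro x hx
        obtain ⟨hxT, hx2⟩ := Finset.mem_filter.mp hx
        by_contra hxx
        exact absurd hx2 (not_le.mpr (hcx2 x (Finset.mem_erase.mpr ⟨hxx, hxT⟩)))
      rw [haa a ha, haa b hb]
    · have heq : T.filter (fun i => ¬(p i).x2 ≤ cstar) = T.erase i1 := by
        ext x
        simp only [Finset.mem_filter, Finset.mem_erase, not_le]
        constructor
        · rintro ⟨hxT, hx2⟩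
          refine ⟨fun hxx => ?_, hxT⟩
          subst hxx; linarith
        · rintro ⟨hxx, hxT⟩
          exact ⟨hxT, hcx2 x (Finset.mem_erase.mpr ⟨hxx, hxT⟩)⟩
      rw [heq]
      refine ih (T.erase i1) ⟨cstar, P.x2, P.y1, P.y2⟩
        (by rw [Finset.card_erase_of_mem hi1]; omega)
        (fun i hi => hub i (Finset.mem_of_mem_erase hi)) ?_
      intro i hi j hj hij
      obtain ⟨c, hc1, hc2⟩ := hpair i (Finset.mem_of_mem_erase hi) j (Finset.mem_of_mem_erase hj) hij
      refine ⟨c, ?_, hc2⟩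
      rcases hc2 with ⟨a, -, -⟩ | ⟨a, -, -⟩
      · exact lt_of_lt_of_le (hcx2 i hi) a
      · exact lt_of_lt_of_le (hcx2 j hj) a

end KS
namespace KS

variable {ι : Type*}

/-- The invariant carried through the induction: a repacking of `S` in `P` that is
guillotine separable, together with at most `t` containers, the 0-th being a
vertical container spanning the full height of `P` and left-aligned, all other
containers lying in the vertical strip of width `u` at the right of `P`. -/
structure INVxData (wd ht : ι → ℝ) (t : ℕ) (P : Rect) (S : Finset ι) where
  pl : ι → Rect
  u : ℝ
  cont : ℕ → Rect
  lab : ℕ → CLabel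
  asg : ι → ℕ
  hu0 : 0 ≤ u
  hu1 : u ≤ P.x2 - P.x1
  hpack : IsPacking wd ht S pl P
  hgs : GuillotineSep pl P S
  hcont0 : cont 0 = ⟨P.x1, P.x2 - u, P.y1, P.y2⟩
  hlab0 : lab 0 = CLabel.vertical
  hrest : ∀ j, 0 < j → j < t → (cont j).SubRect ⟨P.x2 - u, P.x2, P.y1, P.y2⟩
  hlabok : ∀ j < t, lab j ≠ CLabel.area
  hcsub : ∀ j < t, (cont j).SubRect P
  hcdisj : ∀ j < t, ∀ j' < t, j ≠ j' → Disjoint (cont j).toSet (cont j').toSet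
  hasg : ∀ i ∈ S, asg i < t ∧ (pl i).SubRect (cont (asg i))
  hok : ContainerLabelOK S pl t cont lab asg 0
  hk : ∀ i ∈ S, P.x1 < (pl i).x2 ∧ P.y1 < (pl i).y2

/-- Propositional form of the invariant. -/
def INVx (wd ht : ι → ℝ) (t : ℕ) (P : Rect) (S : Finset ι) : Prop :=
  Nonempty (INVxData wd ht t P S)

/-- Base case: at most one item. -/
lemma base_inv (wd ht : ι → ℝ) (t : ℕ) (P : Rect) (S : Finset ι)
    (ht1 : 1 ≤ t) (hx : P.x1 < P.x2) (hy : P.y1 < P.y2) (hcard : S.card ≤ 1)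
    (hfit : ∀ i ∈ S, wd i ≤ P.x2 - P.x1 ∧ ht i ≤ P.y2 - P.y1) :
    INVx wd ht t P S := by
  classical
  refine ⟨?_⟩
  refine
    { pl := fun i => ⟨P.x2 - wd i, P.x2, P.y2 - ht i, P.y2⟩
      u := 0
      cont := fun j => if j = 0 then ⟨P.x1, P.x2, P.y1, P.y2⟩ else ⟨P.x2, P.x2, P.y1, P.y2⟩
      lab := fun _ => CLabel.vertical
      asg := fun _ => 0
      hu0 := le_refl 0
      hu1 := by linarith
      hpack := ?_
      hgs := .base P S hcard
      hcont0 := by norm_num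
      hlab0 := rfl
      hrest := ?_
      hlabok := fun j _ => by simp
      hcsub := ?_
      hcdisj := ?_
      hasg := ?_
      hok := ?_
      hk := ?_ }
  · refine ⟨fun i hi => by simp [Rect.width], fun i hi => by simp [Rect.height],
      fun i hi => ?_, fun i hi j hj hij => ?_⟩
    · refine ⟨?_, le_refl _, ?_, le_refl _⟩ <;> simp only <;>
        [linarith [(hfit i hi).1]; linarith [(hfit i hi).2]]
    · exact absurd (Finset.card_le_one.mp hcard i hi j hj) hij
  · intro j hj0 hjt
    rw [if_neg (Nat.pos_iff_ne_zero.mp hj0)]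
    exact ⟨by norm_num, le_refl _, le_refl _, le_refl _⟩
  · intro j hj
    by_cases hj0 : j = 0
    · rw [if_pos hj0]; exact ⟨le_refl _, le_refl _, le_refl _, le_refl _⟩
    · rw [if_neg hj0]; exact ⟨le_of_lt hx, le_refl _, le_refl _, le_refl _⟩
  · intro j hj j' hj' hne
    rcases Nat.eq_zero_or_pos j with h0 | h0 <;> rcases Nat.eq_zero_or_pos j' with h0' | h0'
    · omega
    · rw [if_pos h0, if_neg (Nat.pos_iff_ne_zero.mp h0')]
      exact disjoint_toSet_x (le_refl P.x2)
    · rw [if_neg (Nat.pos_iff_ne_zero.mp h0), if_pos h0']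
      exact (disjoint_toSet_x (le_refl P.x2)).symm
    · rw [if_neg (Nat.pos_iff_ne_zero.mp h0),
        toSet_empty (show (⟨P.x2, P.x2, P.y1, P.y2⟩ : Rect).x2 ≤ _ from le_refl P.x2)]
      exact Set.disjoint_left.mpr (by simp)
  · intro i hi
    refine ⟨ht1, ?_⟩
    rw [if_pos rfl]
    refine ⟨?_, le_refl _, ?_, le_refl _⟩
    · have := (hfit i hi).1
      simp only
      linarith
    · have := (hfit i hi).2
      simp only
      linarith
  · refine ⟨fun j _ h => absurd h (by simp), fun j _ h => absurd h (by simp),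
      fun j _ _ i hi i' hi' _ _ hne => absurd (Finset.card_le_one.mp hcard i hi i' hi') hne,
      fun j _ h => absurd h (by simp)⟩
  · intro i hi
    simp only
    constructor <;> linarith

end KS
namespace KS

variable {ι : Type*}

/-- Direction change: add a (degenerate) vertical container in front and transpose. -/
lemma ext_inv {wd ht : ι → ℝ} {t : ℕ} {P : Rect} {S : Finset ι}
    (hyy : P.y1 ≤ P.y2) (h : INVx wd ht t P S) : INVx ht wd (t + 1) (tr P) S := by
  classical
  obtain ⟨D⟩ := h
  have hslab : (⟨(tr P).x2 - (P.y2 - P.y1), (tr P).x2, (tr P).y1, (tr P).y2⟩ : Rect) = tr P := by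
    show (⟨P.y2 - (P.y2 - P.y1), P.y2, P.x1, P.x2⟩ : Rect) = _
    rw [sub_sub_cancel]; rfl
  refine ⟨{
      pl := fun i => tr (D.pl i)
      u := P.y2 - P.y1
      cont := fun j => if j = 0 then ⟨(tr P).x1, (tr P).x2 - (P.y2 - P.y1), (tr P).y1, (tr P).y2⟩
        else tr (D.cont (j - 1))
      lab := fun j => if j = 0 then CLabel.vertical else swapLab (D.lab (j - 1))
      asg := fun i => D.asg i + 1
      hu0 := by linarith
      hu1 := le_refl _
      hpack := packing_tr D.hpack
      hgs := gs_tr D.hgs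
      hcont0 := if_pos rfl
      hlab0 := if_pos rfl
      hrest := ?_
      hlabok := ?_
      hcsub := ?_
      hcdisj := ?_
      hasg := ?_
      hok := ?_
      hk := fun i hi => ⟨(D.hk i hi).2, (D.hk i hi).1⟩ }⟩
  · intro j hj0 hjt
    rw [if_neg (Nat.pos_iff_ne_zero.mp hj0), hslab]
    exact subrect_tr (D.hcsub (j - 1) (by omega))
  · intro j hjt
    by_cases hj0 : j = 0
    · rw [if_pos hj0]; simp
    · rw [if_neg hj0]; simpa using D.hlabok (j - 1) (by omega)
  · intro j hjt
    by_cases hj0 : j = 0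
    · rw [if_pos hj0]
      refine ⟨le_refl _, ?_, le_refl _, le_refl _⟩
      show P.y2 - (P.y2 - P.y1) ≤ P.y2; linarith
    · rw [if_neg hj0]
      exact subrect_tr (D.hcsub (j - 1) (by omega))
  · have hempty : (⟨(tr P).x1, (tr P).x2 - (P.y2 - P.y1), (tr P).y1, (tr P).y2⟩ : Rect).toSet
        = ∅ := by
      apply toSet_empty
      show P.y2 - (P.y2 - P.y1) ≤ P.y1; linarith
    intro j hj j' hj' hne
    by_cases hj0 : j = 0
    · rw [if_pos hj0, hempty]
      exact Set.disjoint_left.mpr (by simp)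
    · by_cases hj0' : j' = 0
      · rw [if_pos hj0', hempty, if_neg hj0]
        exact (Set.disjoint_left.mpr (by simp)).symm
      · rw [if_neg hj0, if_neg hj0']
        exact disjoint_tr (D.hcdisj (j - 1) (by omega) (j' - 1) (by omega) (by omega))
  · intro i hi
    refine ⟨by have := (D.hasg i hi).1; omega, ?_⟩
    rw [if_neg (Nat.succ_ne_zero _), Nat.add_sub_cancel]
    exact subrect_tr (D.hasg i hi).2
  · obtain ⟨h1, h2, h3, h4⟩ := D.hok
    refine ⟨?_, ?_, ?_, ?_⟩
    · intro j hjt hlab i hi i' hi' ha ha'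
      dsimp only at hlab ha ha'
      by_cases hj0 : j = 0
      · omega
      · rw [if_neg hj0] at hlab
        exact h1 (j - 1) (by omega) (by simpa using hlab) i hi i' hi'
          (by omega) (by omega)
    · intro j hjt hlab i hi i' hi' ha ha' hne
      dsimp only at hlab ha ha' ⊢
      by_cases hj0 : j = 0
      · omega
      · rw [if_neg hj0] at hlab
        exact h3 (j - 1) (by omega) (by simpa using hlab) i hi i' hi'
          (by omega) (by omega) hne
    · intro j hjt hlab i hi i' hi' ha ha' hne
      dsimp only at hlab ha ha' ⊢
      by_cases hj0 : j = 0
      · omega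
      · rw [if_neg hj0] at hlab
        exact h2 (j - 1) (by omega) (by simpa using hlab) i hi i' hi'
          (by omega) (by omega) hne
    · intro j hjt hlab i hi ha
      dsimp only at hlab
      by_cases hj0 : j = 0
      · rw [if_pos hj0] at hlab; exact absurd hlab (by simp)
      · rw [if_neg hj0] at hlab
        exact absurd (by simpa using hlab) (D.hlabok (j - 1) (by omega))

end KS
namespace KS

variable {ι : Type*}

/-- Merging a family of vertically separated items on the left part with an
invariant packing of the right part. -/
lemma merge_core (wd ht : ι → ℝ) (t : ℕ) (ht1 : 1 ≤ t) (P : Rect) (c : ℝ)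
    (hc1 : P.x1 < c) (hc2 : c < P.x2)
    (S SL SR : Finset ι) (hSLs : SL ⊆ S) (hSRs : SR ⊆ S)
    (hcover : ∀ i ∈ S, i ∈ SL ∨ i ∈ SR) (hdLR : ∀ i ∈ SL, i ∉ SR)
    (pl0 : ι → Rect)
    (hw0 : ∀ i ∈ SL, (pl0 i).width = wd i) (hh0 : ∀ i ∈ SL, (pl0 i).height = ht i)
    (hin0 : ∀ i ∈ SL, (pl0 i).SubRect ⟨P.x1, c, P.y1, P.y2⟩)
    (hdj0 : ∀ i ∈ SL, ∀ j ∈ SL, i ≠ j → Disjoint (pl0 i).toSet (pl0 j).toSet)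
    (hk0 : ∀ i ∈ SL, P.x1 < (pl0 i).x2 ∧ P.y1 < (pl0 i).y2)
    (hfacts : ∀ i ∈ SL, ∀ j ∈ SL, i ≠ j → ∃ c', P.x1 < c' ∧
      ((pl0 i).x2 ≤ c' ∧ c' ≤ (pl0 j).x1 ∧ c' < (pl0 j).x2 ∨
       (pl0 j).x2 ≤ c' ∧ c' ≤ (pl0 i).x1 ∧ c' < (pl0 i).x2))
    (child : INVx wd ht t ⟨c, P.x2, P.y1, P.y2⟩ SR) :
    INVx wd ht t P S := by
  classical
  obtain ⟨D⟩ := child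
  have hnotSL : ∀ i ∈ SR, i ∉ SL := fun i hiR hiL => hdLR i hiL hiR
  have hmemR : ∀ i ∈ S, i ∉ SL → i ∈ SR := fun i hi hni => (hcover i hi).resolve_left hni
  have hDu1 : D.u ≤ P.x2 - c := D.hu1
  have hcu : c ≤ P.x2 - D.u := by linarith
  have hQP : (⟨c, P.x2, P.y1, P.y2⟩ : Rect).SubRect P :=
    ⟨le_of_lt hc1, le_refl _, le_refl _, le_refl _⟩
  have hLP : (⟨P.x1, c, P.y1, P.y2⟩ : Rect).SubRect P :=
    ⟨le_refl _, le_of_lt hc2, le_refl _, le_refl _⟩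
  have hx1R : ∀ i ∈ SR, c ≤ (D.pl i).x1 := fun i hi => (D.hpack.hin i hi).1
  have hx2L : ∀ i ∈ SL, (pl0 i).x2 ≤ c := fun i hi => (hin0 i hi).2.1
  have hx2R : ∀ i ∈ SR, c < (D.pl i).x2 := fun i hi => (D.hk i hi).1
  have hx10 : ∀ i ∈ SR, D.asg i = 0 → c ≤ (D.pl i).x1 := by
    intro i hi ha
    have h2 := (D.hasg i hi).2
    rw [ha, D.hcont0] at h2
    exact h2.1
  refine ⟨{
      pl := fun i => if i ∈ SL then pl0 i else D.pl i
      u := D.u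
      cont := fun j => if j = 0 then ⟨P.x1, P.x2 - D.u, P.y1, P.y2⟩ else D.cont j
      lab := D.lab
      asg := fun i => if i ∈ SL then 0 else D.asg i
      hu0 := D.hu0
      hu1 := by linarith
      hpack := ?_
      hgs := ?_
      hcont0 := if_pos rfl
      hlab0 := D.hlab0
      hrest := ?_
      hlabok := D.hlabok
      hcsub := ?_
      hcdisj := ?_
      hasg := ?_
      hok := ?_
      hk := ?_ }⟩
  -- hpack
  · refine ⟨?_, ?_, ?_, ?_⟩
    · intro i hi
      by_cases h : i ∈ SL
      · rw [if_pos h]; exact hw0 i h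
      · rw [if_neg h]; exact D.hpack.hw i (hmemR i hi h)
    · intro i hi
      by_cases h : i ∈ SL
      · rw [if_pos h]; exact hh0 i h
      · rw [if_neg h]; exact D.hpack.hh i (hmemR i hi h)
    · intro i hi
      by_cases h : i ∈ SL
      · rw [if_pos h]; exact subrect_trans (hin0 i h) hLP
      · rw [if_neg h]; exact subrect_trans (D.hpack.hin i (hmemR i hi h)) hQP
    · intro i hi j hj hij
      by_cases h : i ∈ SL <;> by_cases h' : j ∈ SL
      · rw [if_pos h, if_pos h']; exact hdj0 i h j h' hij
      · rw [if_pos h, if_neg h']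
        exact disjoint_toSet_x (le_trans (hx2L i h) (hx1R j (hmemR j hj h')))
      · rw [if_neg h, if_pos h']
        exact (disjoint_toSet_x (le_trans (hx2L j h') (hx1R i (hmemR i hi h)))).symm
      · rw [if_neg h, if_neg h']
        exact D.hpack.hdisj i (hmemR i hi h) j (hmemR j hj h') hij
  -- hgs
  · have hLeq : (S.filter fun i => ((if i ∈ SL then pl0 i else D.pl i)).x2 ≤ c) = SL := by
      ext x
      simp only [Finset.mem_filter]
      constructor
      · rintro ⟨hxS, hx2⟩
        by_contra hxL
        rw [if_neg hxL] at hx2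
        exact absurd hx2 (not_le.mpr (hx2R x (hmemR x hxS hxL)))
      · intro hxL
        exact ⟨hSLs hxL, by rw [if_pos hxL]; exact hx2L x hxL⟩
    have hReq : (S.filter fun i => ¬((if i ∈ SL then pl0 i else D.pl i)).x2 ≤ c) = SR := by
      ext x
      simp only [Finset.mem_filter]
      constructor
      · rintro ⟨hxS, hx2⟩
        by_cases hxL : x ∈ SL
        · rw [if_pos hxL] at hx2; exact absurd (hx2L x hxL) hx2
        · exact hmemR x hxS hxL
      · intro hxR
        have hxL := hnotSL x hxR
        exact ⟨hSRs hxR, by rw [if_neg hxL]; exact not_le.mpr (hx2R x hxR)⟩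
    refine GuillotineSep.vcut P S c hc1 hc2 ?_ ?_ ?_
    · intro i hi
      by_cases h : i ∈ SL
      · rw [if_pos h]; exact Or.inl (hx2L i h)
      · rw [if_neg h]; exact Or.inr (hx1R i (hmemR i hi h))
    · rw [hLeq]
      refine gsv SL.card SL ⟨P.x1, c, P.y1, P.y2⟩ (le_refl _) ?_ ?_
      · intro i hi; rw [if_pos hi]; exact hx2L i hi
      · intro i hi j hj hij
        obtain ⟨c', hc'⟩ := hfacts i hi j hj hij
        rw [if_pos hi, if_pos hj]
        exact ⟨c', hc'⟩
    · rw [hReq]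
      exact gs_congr D.hgs (fun i hi => if_neg (hnotSL i hi))
  -- hrest
  · intro j hj0 hjt
    rw [if_neg (Nat.pos_iff_ne_zero.mp hj0)]
    exact D.hrest j hj0 hjt
  -- hcsub
  · intro j hjt
    by_cases hj0 : j = 0
    · rw [if_pos hj0]
      refine ⟨le_refl _, ?_, le_refl _, le_refl _⟩
      show P.x2 - D.u ≤ P.x2
      have := D.hu0; linarith
    · rw [if_neg hj0]
      exact subrect_trans (D.hcsub j hjt) hQP
  -- hcdisj
  · intro j hj j' hj' hne
    by_cases hj0 : j = 0 <;> by_cases hj0' : j' = 0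
    · omega
    · rw [if_pos hj0, if_neg hj0']
      exact disjoint_toSet_x (D.hrest j' (by omega) hj').1
    · rw [if_neg hj0, if_pos hj0']
      exact (disjoint_toSet_x (D.hrest j (by omega) hj).1).symm
    · rw [if_neg hj0, if_neg hj0']
      exact D.hcdisj j hj j' hj' hne
  -- hasg
  · intro i hi
    by_cases h : i ∈ SL
    · rw [if_pos h, if_pos h, if_pos rfl]
      refine ⟨ht1, (hin0 i h).1, le_trans (hx2L i h) hcu, (hin0 i h).2.2.1, (hin0 i h).2.2.2⟩
    · have hiR := hmemR i hi h
      rw [if_neg h, if_neg h]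
      refine ⟨(D.hasg i hiR).1, ?_⟩
      by_cases ha : D.asg i = 0
      · rw [ha, if_pos rfl]
        have h2 := (D.hasg i hiR).2
        rw [ha, D.hcont0] at h2
        exact subrect_trans h2 ⟨le_of_lt hc1, le_refl _, le_refl _, le_refl _⟩
      · rw [if_neg ha]
        exact (D.hasg i hiR).2
  -- hok
  · obtain ⟨h1, h2, h3, h4⟩ := D.hok
    refine ⟨?_, ?_, ?_, ?_⟩
    · intro j hjt hlab i hi i' hi' ha ha'
      dsimp only at ha ha'
      have hj0 : j ≠ 0 := fun h0 => by rw [h0, D.hlab0] at hlab; exact absurd hlab (by simp)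
      have hiL : i ∉ SL := fun hL => hj0 (by rw [if_pos hL] at ha; omega)
      have hiL' : i' ∉ SL := fun hL => hj0 (by rw [if_pos hL] at ha'; omega)
      rw [if_neg hiL] at ha; rw [if_neg hiL'] at ha'
      exact h1 j hjt hlab i (hmemR i hi hiL) i' (hmemR i' hi' hiL') ha ha'
    · intro j hjt hlab i hi i' hi' ha ha' hne
      dsimp only at ha ha' ⊢
      have hj0 : j ≠ 0 := fun h0 => by rw [h0, D.hlab0] at hlab; exact absurd hlab (by simp)
      have hiL : i ∉ SL := fun hL => hj0 (by rw [if_pos hL] at ha; omega)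
      have hiL' : i' ∉ SL := fun hL => hj0 (by rw [if_pos hL] at ha'; omega)
      rw [if_neg hiL] at ha ⊢; rw [if_neg hiL'] at ha' ⊢
      exact h2 j hjt hlab i (hmemR i hi hiL) i' (hmemR i' hi' hiL') ha ha' hne
    · intro j hjt hlab i hi i' hi' ha ha' hne
      dsimp only at ha ha' ⊢
      by_cases hj0 : j = 0
      · subst hj0
        by_cases hiL : i ∈ SL <;> by_cases hiL' : i' ∈ SL
        · rw [if_pos hiL, if_pos hiL']
          obtain ⟨c', hcc, hor⟩ := hfacts i hiL i' hiL' hne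
          rcases hor with ⟨a, b, -⟩ | ⟨a, b, -⟩
          · exact Or.inl (le_trans a b)
          · exact Or.inr (le_trans a b)
        · rw [if_pos hiL, if_neg hiL']
          rw [if_neg hiL'] at ha'
          exact Or.inl (le_trans (hx2L i hiL)
            (hx10 i' (hmemR i' hi' hiL') ha'))
        · rw [if_neg hiL, if_pos hiL']
          rw [if_neg hiL] at ha
          exact Or.inr (le_trans (hx2L i' hiL')
            (hx10 i (hmemR i hi hiL) ha))
        · rw [if_neg hiL, if_neg hiL']
          rw [if_neg hiL] at ha; rw [if_neg hiL'] at ha'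
          exact h3 0 (by omega) D.hlab0 i (hmemR i hi hiL) i' (hmemR i' hi' hiL') ha ha' hne
      · have hiL : i ∉ SL := fun hL => hj0 (by rw [if_pos hL] at ha; omega)
        have hiL' : i' ∉ SL := fun hL => hj0 (by rw [if_pos hL] at ha'; omega)
        rw [if_neg hiL] at ha ⊢; rw [if_neg hiL'] at ha' ⊢
        exact h3 j hjt hlab i (hmemR i hi hiL) i' (hmemR i' hi' hiL') ha ha' hne
    · intro j hjt hlab i hi ha
      exact absurd hlab (D.hlabok j hjt)
  -- hk
  · intro i hi
    by_cases h : i ∈ SL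
    · rw [if_pos h]; exact hk0 i h
    · rw [if_neg h]
      have hiR := hmemR i hi h
      exact ⟨lt_trans hc1 (hx2R i hiR), (D.hk i hiR).2⟩

end KS
namespace KS

variable {ι : Type*}

/-- The invariant is translation-equivariant. -/
lemma inv_xsh {wd ht : ι → ℝ} {t : ℕ} {P : Rect} {S : Finset ι} (a : ℝ)
    (h : INVx wd ht t P S) : INVx wd ht t (xsh a P) S := by
  obtain ⟨D⟩ := h
  have hslab : (⟨(xsh a P).x2 - D.u, (xsh a P).x2, (xsh a P).y1, (xsh a P).y2⟩ : Rect)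
      = xsh a ⟨P.x2 - D.u, P.x2, P.y1, P.y2⟩ := by
    show (⟨P.x2 + a - D.u, P.x2 + a, P.y1, P.y2⟩ : Rect) = ⟨P.x2 - D.u + a, P.x2 + a, P.y1, P.y2⟩
    rw [show P.x2 + a - D.u = P.x2 - D.u + a by ring]
  refine ⟨{
      pl := fun i => xsh a (D.pl i)
      u := D.u
      cont := fun j => xsh a (D.cont j)
      lab := D.lab
      asg := D.asg
      hu0 := D.hu0
      hu1 := by have := D.hu1; show D.u ≤ P.x2 + a - (P.x1 + a); linarith
      hpack := packing_xsh a D.hpack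
      hgs := gs_xsh a D.hgs
      hcont0 := by
        show xsh a (D.cont 0) = _
        rw [D.hcont0]
        show (⟨P.x1 + a, P.x2 - D.u + a, P.y1, P.y2⟩ : Rect)
          = ⟨P.x1 + a, P.x2 + a - D.u, P.y1, P.y2⟩
        rw [show P.x2 - D.u + a = P.x2 + a - D.u by ring]
      hlab0 := D.hlab0
      hrest := fun j hj0 hjt => by rw [hslab]; exact subrect_xsh a (D.hrest j hj0 hjt)
      hlabok := D.hlabok
      hcsub := fun j hjt => subrect_xsh a (D.hcsub j hjt)
      hcdisj := fun j hj j' hj' hne => disjoint_xsh a (D.hcdisj j hj j' hj' hne)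
      hasg := fun i hi => ⟨(D.hasg i hi).1, subrect_xsh a (D.hasg i hi).2⟩
      hok := ?_
      hk := fun i hi => ⟨by have := (D.hk i hi).1; show P.x1 + a < (D.pl i).x2 + a; linarith,
        (D.hk i hi).2⟩ }⟩
  obtain ⟨h1, h2, h3, h4⟩ := D.hok
  refine ⟨h1, fun j hjt hlab i hi i' hi' ha ha' hne =>
      h2 j hjt hlab i hi i' hi' ha ha' hne, ?_, ?_⟩
  · intro j hjt hlab i hi i' hi' ha ha' hne
    rcases h3 j hjt hlab i hi i' hi' ha ha' hne with h | h
    · exact Or.inl (by show (D.pl i).x2 + a ≤ (D.pl i').x1 + a; linarith)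
    · exact Or.inr (by show (D.pl i').x2 + a ≤ (D.pl i).x1 + a; linarith)
  · intro j hjt hlab i hi ha
    exact absurd hlab (D.hlabok j hjt)

end KS
namespace KS

variable {ι : Type*}

/-- One vertical cut at the top stage: combine the two sides into a single invariant. -/
lemma step_cut (N : ℝ) (hN : 0 < N) (wd ht : ι → ℝ) (q : ι → Rect) (t : ℕ) (ht1 : 1 ≤ t)
    (P : Rect) (hPk : P.SubRect (knapsack N)) (S : Finset ι)
    (hpack : IsPacking wd ht S q P)
    (hlong : ∀ i ∈ S, N / 2 < wd i ∨ N / 2 < ht i)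
    (c : ℝ) (hc1 : P.x1 < c) (hc2 : c < P.x2)
    (hcross : ∀ i ∈ S, (q i).x2 ≤ c ∨ c ≤ (q i).x1)
    (hLder : StageSep q t true ⟨P.x1, c, P.y1, P.y2⟩ (S.filter fun i => (q i).x2 ≤ c))
    (hRder : StageSep q t true ⟨c, P.x2, P.y1, P.y2⟩ (S.filter fun i => ¬(q i).x2 ≤ c))
    (IHL : INVx wd ht t ⟨P.x1, c, P.y1, P.y2⟩ (S.filter fun i => (q i).x2 ≤ c))
    (IHR : INVx wd ht t ⟨c, P.x2, P.y1, P.y2⟩ (S.filter fun i => ¬(q i).x2 ≤ c)) :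
    INVx wd ht t P S := by
  classical
  obtain ⟨hP1, hP2, hP3, hP4⟩ := hPk
  have hx0 : (0 : ℝ) ≤ P.x1 := hP1
  have hxN : P.x2 ≤ N := hP2
  have hy0 : (0 : ℝ) ≤ P.y1 := hP3
  have hyN : P.y2 ≤ N := hP4
  set SLf := S.filter (fun i => (q i).x2 ≤ c) with hSLf
  set SRf := S.filter (fun i => ¬(q i).x2 ≤ c) with hSRf
  have hSLs : SLf ⊆ S := Finset.filter_subset _ _
  have hSRs : SRf ⊆ S := Finset.filter_subset _ _
  have hmemL : ∀ i ∈ SLf, (q i).x2 ≤ c := fun i hi => (Finset.mem_filter.mp hi).2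
  have hmemR : ∀ i ∈ SRf, c < (q i).x2 := fun i hi =>
    not_le.mp (Finset.mem_filter.mp hi).2
  have hx1R : ∀ i ∈ SRf, c ≤ (q i).x1 := fun i hi =>
    (hcross i (hSRs hi)).resolve_left (Finset.mem_filter.mp hi).2
  have hwd : ∀ i ∈ S, (q i).x2 - (q i).x1 = wd i := fun i hi => hpack.hw i hi
  have hht : ∀ i ∈ S, (q i).y2 - (q i).y1 = ht i := fun i hi => hpack.hh i hi
  have hinP : ∀ i ∈ S, P.x1 ≤ (q i).x1 ∧ (q i).x2 ≤ P.x2 ∧ P.y1 ≤ (q i).y1 ∧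
      (q i).y2 ≤ P.y2 := fun i hi => hpack.hin i hi
  -- a tall pair is never separated in the y direction
  have killy : ∀ T : Finset ι, T ⊆ S → (∀ i ∈ T, N / 2 < ht i) →
      ∀ {Q : Rect}, StageSep q t true Q T →
      ∀ i ∈ T, ∀ j ∈ T, i ≠ j → ∃ c', Q.x1 < c' ∧ c' < Q.x2 ∧
        ((q i).x2 ≤ c' ∧ c' ≤ (q j).x1 ∧ c' < (q j).x2 ∨
         (q j).x2 ≤ c' ∧ c' ≤ (q i).x1 ∧ c' < (q i).x2) := by
    intro T hTS htall Q hder i hi j hj hij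
    rcases sep_local hder i hi j hj hij with hx | hy
    · exact hx
    · exfalso
      obtain ⟨cy, -, -, hor⟩ := hy
      have h1 := htall i hi; have h2 := htall j hj
      have h3 := hht i (hTS hi); have h4 := hht j (hTS hj)
      have h5 := (hinP i (hTS hi)).2.2; have h6 := (hinP j (hTS hj)).2.2
      rcases hor with ⟨a, b, -⟩ | ⟨a, b, -⟩ <;> linarith [h5.1, h5.2, h6.1, h6.2, hy0, hyN]
  by_cases hwide : ∃ i ∈ SLf, N / 2 < wd i
  · -- the left side contains a wide item, so the right side is pure (all tall);
    -- translate the left invariant to the right and pack the right items at the left.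
    obtain ⟨iw, hiw, hwiw⟩ := hwide
    have htallR : ∀ j ∈ SRf, N / 2 < ht j := by
      intro j hj
      rcases hlong j (hSRs hj) with hw | hh
      · exfalso
        have e1 : wd iw ≤ c - P.x1 := by
          have := hwd iw (hSLs hiw); have := (hinP iw (hSLs hiw)).1
          have := hmemL iw hiw; linarith
        have e2 : wd j ≤ P.x2 - c := by
          have := hwd j (hSRs hj); have := hx1R j hj
          have := (hinP j (hSRs hj)).2.1; linarith
        linarith
      · exact hh
    have xfactsR := killy SRf hSRs htallR hRder
    set a := P.x2 - c with ha
    set sh := P.x1 - c with hsh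
    set cs := P.x1 + (P.x2 - c) with hcs
    have hpiece : xsh a (⟨P.x1, c, P.y1, P.y2⟩ : Rect) = ⟨cs, P.x2, P.y1, P.y2⟩ := by
      show (⟨P.x1 + a, c + a, P.y1, P.y2⟩ : Rect) = _
      rw [show c + a = P.x2 by rw [ha]; ring]
    have child' : INVx wd ht t ⟨cs, P.x2, P.y1, P.y2⟩ SLf := by
      rw [← hpiece]; exact inv_xsh a IHL
    refine merge_core wd ht t ht1 P cs (by rw [hcs]; linarith) (by rw [hcs]; linarith)
      S SRf SLf hSRs hSLs ?_ ?_ (fun i => xsh sh (q i)) ?_ ?_ ?_ ?_ ?_ ?_ child'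
    · intro i hi
      by_cases h : (q i).x2 ≤ c
      · exact Or.inr (Finset.mem_filter.mpr ⟨hi, h⟩)
      · exact Or.inl (Finset.mem_filter.mpr ⟨hi, h⟩)
    · intro i hiR hiL
      exact absurd (Finset.mem_filter.mp hiL).2 (not_le.mpr (hmemR i hiR))
    · intro i hi; rw [xsh_width]; exact hpack.hw i (hSRs hi)
    · intro i hi; rw [xsh_height]; exact hpack.hh i (hSRs hi)
    · intro i hi
      have h1 := hx1R i hi
      have h2 := (hinP i (hSRs hi)).2.1
      have h3 := (hinP i (hSRs hi)).2.2
      exact ⟨by show P.x1 ≤ (q i).x1 + sh; rw [hsh]; linarith,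
        by show (q i).x2 + sh ≤ cs; rw [hsh, hcs]; linarith, h3.1, h3.2⟩
    · intro i hi j hj hij
      exact disjoint_xsh sh (hpack.hdisj i (hSRs hi) j (hSRs hj) hij)
    · intro i hi
      have h1 := hmemR i hi
      have h2 := htallR i hi
      have h3 := hht i (hSRs hi)
      have h4 := (hinP i (hSRs hi)).2.2.1
      refine ⟨by show P.x1 < (q i).x2 + sh; rw [hsh]; linarith,
        by show P.y1 < (q i).y2; linarith⟩
    · intro i hi j hj hij
      obtain ⟨c', hcc1, hcc2, hor⟩ := xfactsR i hi j hj hij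
      have hcc1' : c < c' := hcc1
      refine ⟨c' + sh, by show P.x1 < c' + sh; rw [hsh]; linarith, ?_⟩
      rcases hor with ⟨e1, e2, e3⟩ | ⟨e1, e2, e3⟩
      · exact Or.inl ⟨by show (q i).x2 + sh ≤ c' + sh; linarith,
          by show c' + sh ≤ (q j).x1 + sh; linarith,
          by show c' + sh < (q j).x2 + sh; linarith⟩
      · exact Or.inr ⟨by show (q j).x2 + sh ≤ c' + sh; linarith,
          by show c' + sh ≤ (q i).x1 + sh; linarith,
          by show c' + sh < (q i).x2 + sh; linarith⟩
  · -- the left side is pure (all tall); keep everything in place, except possibly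
    -- one degenerate item hugging the left edge, which gets relocated.
    have htallL : ∀ j ∈ SLf, N / 2 < ht j := by
      intro j hj
      rcases hlong j (hSLs hj) with hw | hh
      · exact absurd ⟨j, hj, hw⟩ hwide
      · exact hh
    have xfactsL := killy SLf hSLs htallL hLder
    have hcover : ∀ i ∈ S, i ∈ SLf ∨ i ∈ SRf := by
      intro i hi
      by_cases h : (q i).x2 ≤ c
      · exact Or.inl (Finset.mem_filter.mpr ⟨hi, h⟩)
      · exact Or.inr (Finset.mem_filter.mpr ⟨hi, h⟩)
    have hdLR : ∀ i ∈ SLf, i ∉ SRf := fun i hiL hiR =>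
      absurd (hmemL i hiL) (Finset.mem_filter.mp hiR).2
    by_cases hbad : ∃ b ∈ SLf, (q b).x2 ≤ P.x1
    · obtain ⟨b, hbL, hbx2⟩ := hbad
      have huniq : ∀ j ∈ SLf, (q j).x2 ≤ P.x1 → j = b := by
        intro j hj hjx2
        by_contra hne
        obtain ⟨c', e1, -, hor⟩ := xfactsL j hj b hbL hne
        rcases hor with ⟨f1, -, f3⟩ | ⟨f1, -, f3⟩ <;> linarith
      have H : ∀ j, ∃ cc, j ∈ SLf.erase b →
          P.x1 < cc ∧ cc ≤ (q j).x1 ∧ cc < (q j).x2 ∧ cc < c := by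
        intro j
        by_cases hj : j ∈ SLf.erase b
        · obtain ⟨hjb, hjL⟩ := Finset.mem_erase.mp hj
          obtain ⟨c', e1, e2, hor⟩ := xfactsL b hbL j hjL (fun h => hjb h.symm)
          rcases hor with ⟨f1, f2, f3⟩ | ⟨f1, f2, f3⟩
          · exact ⟨c', fun _ => ⟨e1, f2, f3, e2⟩⟩
          · exact absurd f3 (not_lt.mpr (le_trans hbx2 (le_of_lt e1)))
        · exact ⟨0, fun h => absurd h hj⟩
      choose g hg using H
      have wdb : wd b ≤ 0 := by
        have := hwd b (hSLs hbL); have := (hinP b (hSLs hbL)).1; linarith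
      set ξ : ℝ := if hne : (SLf.erase b).Nonempty then (SLf.erase b).inf' hne g else c
        with hξdef
      have hξ1 : P.x1 < ξ := by
        rw [hξdef]; split
        · next hne => rw [Finset.lt_inf'_iff]; exact fun j hj => (hg j hj).1
        · exact hc1
      have hξc : ξ ≤ c := by
        rw [hξdef]; split
        · next hne =>
            obtain ⟨j0, hj0⟩ := hne
            exact le_of_lt (lt_of_le_of_lt (Finset.inf'_le g hj0) (hg j0 hj0).2.2.2)
        · exact le_refl c
      have hξj : ∀ j ∈ SLf.erase b, ξ ≤ (q j).x1 ∧ ξ < (q j).x2 := by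
        intro j hj
        have hne : (SLf.erase b).Nonempty := ⟨j, hj⟩
        rw [hξdef, dif_pos hne]
        exact ⟨le_trans (Finset.inf'_le g hj) (hg j hj).2.1,
          lt_of_le_of_lt (Finset.inf'_le g hj) (hg j hj).2.2.1⟩
      set pl0 : ι → Rect := fun i => if i = b then ⟨ξ - wd b, ξ, (q b).y1, (q b).y2⟩ else q i
        with hpl0
      have hpl0b : pl0 b = ⟨ξ - wd b, ξ, (q b).y1, (q b).y2⟩ := if_pos rfl
      have hpl0n : ∀ j, j ≠ b → pl0 j = q j := fun j hj => if_neg hj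
      have hbempty : (pl0 b).toSet = ∅ := by
        rw [hpl0b]; exact toSet_empty (by show ξ ≤ ξ - wd b; linarith)
      refine merge_core wd ht t ht1 P c hc1 hc2 S SLf SRf hSLs hSRs hcover hdLR
        pl0 ?_ ?_ ?_ ?_ ?_ ?_ IHR
      · intro i hi
        by_cases h : i = b
        · rw [h, hpl0b]
          show ξ - (ξ - wd b) = wd b; ring
        · rw [hpl0n i h]; exact hpack.hw i (hSLs hi)
      · intro i hi
        by_cases h : i = b
        · rw [h, hpl0b]
          show (q b).y2 - (q b).y1 = ht b
          exact hht b (hSLs hbL)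
        · rw [hpl0n i h]; exact hpack.hh i (hSLs hi)
      · intro i hi
        by_cases h : i = b
        · rw [h, hpl0b]
          have h3 := (hinP b (hSLs hbL)).2.2
          exact ⟨by show P.x1 ≤ ξ - wd b; linarith, by show ξ ≤ c; exact hξc, h3.1, h3.2⟩
        · rw [hpl0n i h]
          exact ⟨(hinP i (hSLs hi)).1, hmemL i hi, (hinP i (hSLs hi)).2.2.1,
            (hinP i (hSLs hi)).2.2.2⟩
      · intro i hi j hj hij
        by_cases h : i = b
        · rw [h, hbempty]; exact Set.disjoint_left.mpr (by simp)
        · by_cases h' : j = b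
          · rw [h', hbempty]; exact (Set.disjoint_left.mpr (by simp)).symm
          · rw [hpl0n i h, hpl0n j h']
            exact hpack.hdisj i (hSLs hi) j (hSLs hj) hij
      · intro i hi
        by_cases h : i = b
        · rw [h, hpl0b]
          have h2 := htallL b hbL
          have h3 := hht b (hSLs hbL)
          have h4 := (hinP b (hSLs hbL)).2.2.1
          exact ⟨by show P.x1 < ξ; exact hξ1, by show P.y1 < (q b).y2; linarith⟩
        · have hnb : ¬(q i).x2 ≤ P.x1 := fun hcon => h (huniq i hi hcon)
          rw [hpl0n i h]
          have h2 := htallL i hi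
          have h3 := hht i (hSLs hi)
          have h4 := (hinP i (hSLs hi)).2.2.1
          exact ⟨not_le.mp hnb, by linarith⟩
      · intro i hi j hj hij
        by_cases h : i = b
        · have hjne : j ≠ b := fun hc => hij (h.trans hc.symm)
          have hjb : j ∈ SLf.erase b := Finset.mem_erase.mpr ⟨hjne, hj⟩
          rw [h, hpl0b, hpl0n j hjne]
          refine ⟨g j, (hg j hjb).1, Or.inl ⟨?_, (hg j hjb).2.1, (hg j hjb).2.2.1⟩⟩
          show ξ ≤ g j
          have hne : (SLf.erase b).Nonempty := ⟨j, hjb⟩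
          rw [hξdef, dif_pos hne]
          exact Finset.inf'_le g hjb
        · by_cases h' : j = b
          · have hib : i ∈ SLf.erase b := Finset.mem_erase.mpr ⟨h, hi⟩
            rw [h', hpl0b, hpl0n i h]
            refine ⟨g i, (hg i hib).1, Or.inr ⟨?_, (hg i hib).2.1, (hg i hib).2.2.1⟩⟩
            show ξ ≤ g i
            have hne : (SLf.erase b).Nonempty := ⟨i, hib⟩
            rw [hξdef, dif_pos hne]
            exact Finset.inf'_le g hib
          · rw [hpl0n i h, hpl0n j h']
            obtain ⟨c', e1, -, hor⟩ := xfactsL i hi j hj hij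
            exact ⟨c', e1, hor⟩
    · -- no degenerate item: keep the original placement on the left
      refine merge_core wd ht t ht1 P c hc1 hc2 S SLf SRf hSLs hSRs hcover hdLR
        q (fun i hi => hpack.hw i (hSLs hi)) (fun i hi => hpack.hh i (hSLs hi)) ?_ ?_ ?_ ?_ IHR
      · intro i hi
        exact ⟨(hinP i (hSLs hi)).1, hmemL i hi, (hinP i (hSLs hi)).2.2.1,
          (hinP i (hSLs hi)).2.2.2⟩
      · intro i hi j hj hij
        exact hpack.hdisj i (hSLs hi) j (hSLs hj) hij
      · intro i hi
        have h2 := htallL i hi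
        have h3 := hht i (hSLs hi)
        have h4 := (hinP i (hSLs hi)).2.2.1
        refine ⟨?_, by linarith⟩
        push_neg at hbad
        exact hbad i hi
      · intro i hi j hj hij
        obtain ⟨c', e1, -, hor⟩ := xfactsL i hi j hj hij
        exact ⟨c', e1, hor⟩

end KS
namespace KS

variable {ι : Type*}

/-- The main induction: a `t`-stage separable packing of long items yields the invariant. -/
lemma main_inv (N : ℝ) (hN : 0 < N) (wd ht : ι → ℝ) (place : ι → Rect) :
    ∀ {t : ℕ} {d : Bool} {P : Rect} {S : Finset ι}, StageSep place t d P S →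
    1 ≤ t → P.SubRect (knapsack N) → P.x1 < P.x2 → P.y1 < P.y2 →
    IsPacking wd ht S place P → (∀ i ∈ S, N / 2 < wd i ∨ N / 2 < ht i) →
    (d = true → INVx wd ht t P S) ∧ (d = false → INVx ht wd t (tr P) S) := by
  intro t d P S h
  induction h with
  | base s d P S hS =>
    intro ht1 hPk hx hy hpack hlong
    have hfit : ∀ i ∈ S, wd i ≤ P.x2 - P.x1 ∧ ht i ≤ P.y2 - P.y1 := by
      intro i hi
      have h1 := hpack.hw i hi
      have h2 := hpack.hh i hi
      have h3 := hpack.hin i hi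
      constructor
      · have := h3.1; have := h3.2.1
        show wd i ≤ P.x2 - P.x1
        rw [← h1]; show (place i).x2 - (place i).x1 ≤ _; linarith
      · have := h3.2.2.1; have := h3.2.2.2
        rw [← h2]; show (place i).y2 - (place i).y1 ≤ _; linarith
    constructor
    · intro _; exact base_inv wd ht s P S ht1 hx hy hS hfit
    · intro _
      exact base_inv ht wd s (tr P) S ht1 hy hx hS
        (fun i hi => ⟨(hfit i hi).2, (hfit i hi).1⟩)
  | vcut s P S c h1 h2 hcross hL hR ihL ihR =>
    intro ht1 hPk hx hy hpack hlong
    obtain ⟨hP1, hP2, hP3, hP4⟩ := hPk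
    have hPkL : (⟨P.x1, c, P.y1, P.y2⟩ : Rect).SubRect (knapsack N) :=
      ⟨hP1, le_trans (le_of_lt h2) hP2, hP3, hP4⟩
    have hPkR : (⟨c, P.x2, P.y1, P.y2⟩ : Rect).SubRect (knapsack N) :=
      ⟨le_trans hP1 (le_of_lt h1), hP2, hP3, hP4⟩
    have packL : IsPacking wd ht (S.filter fun i => (place i).x2 ≤ c) place
        ⟨P.x1, c, P.y1, P.y2⟩ := by
      refine ⟨fun i hi => hpack.hw i (Finset.mem_of_mem_filter i hi),
        fun i hi => hpack.hh i (Finset.mem_of_mem_filter i hi), fun i hi => ?_,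
        fun i hi j hj hij => hpack.hdisj i (Finset.mem_of_mem_filter i hi)
          j (Finset.mem_of_mem_filter j hj) hij⟩
      obtain ⟨hiS, hix⟩ := Finset.mem_filter.mp hi
      have h3 := hpack.hin i hiS
      exact ⟨h3.1, hix, h3.2.2.1, h3.2.2.2⟩
    have packR : IsPacking wd ht (S.filter fun i => ¬(place i).x2 ≤ c) place
        ⟨c, P.x2, P.y1, P.y2⟩ := by
      refine ⟨fun i hi => hpack.hw i (Finset.mem_of_mem_filter i hi),
        fun i hi => hpack.hh i (Finset.mem_of_mem_filter i hi), fun i hi => ?_,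
        fun i hi j hj hij => hpack.hdisj i (Finset.mem_of_mem_filter i hi)
          j (Finset.mem_of_mem_filter j hj) hij⟩
      obtain ⟨hiS, hix⟩ := Finset.mem_filter.mp hi
      have h3 := hpack.hin i hiS
      exact ⟨(hcross i hiS).resolve_left hix, h3.2.1, h3.2.2.1, h3.2.2.2⟩
    have longL : ∀ i ∈ S.filter (fun i => (place i).x2 ≤ c), N / 2 < wd i ∨ N / 2 < ht i :=
      fun i hi => hlong i (Finset.mem_of_mem_filter i hi)
    have longR : ∀ i ∈ S.filter (fun i => ¬(place i).x2 ≤ c), N / 2 < wd i ∨ N / 2 < ht i :=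
      fun i hi => hlong i (Finset.mem_of_mem_filter i hi)
    have IHL := (ihL (by omega) hPkL h1 hy packL longL).1 rfl
    have IHR := (ihR (by omega) hPkR h2 hy packR longR).1 rfl
    refine ⟨fun _ => ?_, fun hcon => by simp at hcon⟩
    exact step_cut N hN wd ht place (s + 1) ht1 P ⟨hP1, hP2, hP3, hP4⟩ S hpack hlong
      c h1 h2 hcross hL hR IHL IHR
  | hcut s P S c h1 h2 hcross hB hT ihB ihT =>
    intro ht1 hPk hx hy hpack hlong
    obtain ⟨hP1, hP2, hP3, hP4⟩ := hPk
    have hPkB : (⟨P.x1, P.x2, P.y1, c⟩ : Rect).SubRect (knapsack N) :=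
      ⟨hP1, hP2, hP3, le_trans (le_of_lt h2) hP4⟩
    have hPkT : (⟨P.x1, P.x2, c, P.y2⟩ : Rect).SubRect (knapsack N) :=
      ⟨hP1, hP2, le_trans hP3 (le_of_lt h1), hP4⟩
    have packB : IsPacking wd ht (S.filter fun i => (place i).y2 ≤ c) place
        ⟨P.x1, P.x2, P.y1, c⟩ := by
      refine ⟨fun i hi => hpack.hw i (Finset.mem_of_mem_filter i hi),
        fun i hi => hpack.hh i (Finset.mem_of_mem_filter i hi), fun i hi => ?_,
        fun i hi j hj hij => hpack.hdisj i (Finset.mem_of_mem_filter i hi)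
          j (Finset.mem_of_mem_filter j hj) hij⟩
      obtain ⟨hiS, hiy⟩ := Finset.mem_filter.mp hi
      have h3 := hpack.hin i hiS
      exact ⟨h3.1, h3.2.1, h3.2.2.1, hiy⟩
    have packT : IsPacking wd ht (S.filter fun i => ¬(place i).y2 ≤ c) place
        ⟨P.x1, P.x2, c, P.y2⟩ := by
      refine ⟨fun i hi => hpack.hw i (Finset.mem_of_mem_filter i hi),
        fun i hi => hpack.hh i (Finset.mem_of_mem_filter i hi), fun i hi => ?_,
        fun i hi j hj hij => hpack.hdisj i (Finset.mem_of_mem_filter i hi)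
          j (Finset.mem_of_mem_filter j hj) hij⟩
      obtain ⟨hiS, hiy⟩ := Finset.mem_filter.mp hi
      have h3 := hpack.hin i hiS
      exact ⟨h3.1, h3.2.1, (hcross i hiS).resolve_left hiy, h3.2.2.2⟩
    have longB : ∀ i ∈ S.filter (fun i => (place i).y2 ≤ c), N / 2 < wd i ∨ N / 2 < ht i :=
      fun i hi => hlong i (Finset.mem_of_mem_filter i hi)
    have longT : ∀ i ∈ S.filter (fun i => ¬(place i).y2 ≤ c), N / 2 < wd i ∨ N / 2 < ht i :=
      fun i hi => hlong i (Finset.mem_of_mem_filter i hi)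
    have IHB := (ihB (by omega) hPkB hx h1 packB longB).2 rfl
    have IHT := (ihT (by omega) hPkT hx h2 packT longT).2 rfl
    refine ⟨fun hcon => by simp at hcon, fun _ => ?_⟩
    exact step_cut N hN ht wd (fun i => tr (place i)) (s + 1) ht1 (tr P)
      (subrect_tr ⟨hP1, hP2, hP3, hP4⟩) S (packing_tr hpack)
      (fun i hi => (hlong i hi).symm)
      c h1 h2 (fun i hi => hcross i hi) (stage_tr hB) (stage_tr hT) IHB IHT
  | skip s d P S h ih =>
    intro ht1 hPk hx hy hpack hlong
    by_cases hs : s = 0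
    · subst hs
      have hcard := stage0 h
      have hfit : ∀ i ∈ S, wd i ≤ P.x2 - P.x1 ∧ ht i ≤ P.y2 - P.y1 := by
        intro i hi
        have h1 := hpack.hw i hi
        have h2 := hpack.hh i hi
        have h3 := hpack.hin i hi
        constructor
        · have := h3.1; have := h3.2.1
          rw [← h1]; show (place i).x2 - (place i).x1 ≤ _; linarith
        · have := h3.2.2.1; have := h3.2.2.2
          rw [← h2]; show (place i).y2 - (place i).y1 ≤ _; linarith
      constructor
      · intro _; exact base_inv wd ht (0 + 1) P S (by omega) hx hy hcard hfit
      · intro _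
        exact base_inv ht wd (0 + 1) (tr P) S (by omega) hy hx hcard
          (fun i hi => ⟨(hfit i hi).2, (hfit i hi).1⟩)
    · have IH := ih (by omega) hPk hx hy hpack hlong
      cases d with
      | true =>
        refine ⟨fun hcon => by simp at hcon, fun _ => ?_⟩
        exact ext_inv (le_of_lt hy) (IH.1 rfl)
      | false =>
        refine ⟨fun _ => ?_, fun hcon => by simp at hcon⟩
        have h2 := ext_inv (P := tr P) (le_of_lt hx) (IH.2 rfl)
        rw [tr_tr] at h2
        exact h2
end KS

/-- If a set of long rectangles admits a `k`-stage packing into an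
`N × N` knapsack, then it admits a guillotine-separable container packing of the same
knapsack using at most `k` containers, each containing a single item, or horizontal
items stacked one above another, or vertical items placed side by side. -/
theorem k_stage_to_k_containers
    {ι : Type*} (N : ℝ) (hN : 0 < N) (wd ht : ι → ℝ)
    (S : Finset ι) (hlong : ∀ i ∈ S, N / 2 < wd i ∨ N / 2 < ht i)
    (k : ℕ) (hk : 1 ≤ k) (place : ι → Rect)
    (hpack : IsPacking wd ht S place (knapsack N))
    (hstage : KStageSep place k (knapsack N) S) :
    ∃ place' : ι → Rect,
      IsPacking wd ht S place' (knapsack N) ∧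
      GuillotineSep place' (knapsack N) S ∧
      ∃ (cont : ℕ → Rect) (lab : ℕ → CLabel) (asg : ι → ℕ),
        (∀ j < k, lab j ≠ CLabel.area) ∧
        (∀ j < k, (cont j).SubRect (knapsack N)) ∧
        (∀ j < k, ∀ j' < k, j ≠ j' → Disjoint (cont j).toSet (cont j').toSet) ∧
        (∀ i ∈ S, asg i < k ∧ (place' i).SubRect (cont (asg i))) ∧
        ContainerLabelOK S place' k cont lab asg 0 := by
  obtain ⟨d, hd⟩ := hstage
  have hkn : (knapsack N).SubRect (knapsack N) :=
    ⟨le_refl _, le_refl _, le_refl _, le_refl _⟩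
  have hx : (knapsack N).x1 < (knapsack N).x2 := hN
  have hy : (knapsack N).y1 < (knapsack N).y2 := hN
  have main := KS.main_inv N hN wd ht place hd hk hkn hx hy hpack hlong
  cases d with
  | true =>
    obtain ⟨D⟩ := main.1 rfl
    exact ⟨D.pl, D.hpack, D.hgs, D.cont, D.lab, D.asg, D.hlabok, D.hcsub, D.hcdisj,
      D.hasg, D.hok⟩
  | false =>
    obtain ⟨D⟩ := main.2 rfl
    obtain ⟨h1, h2, h3, h4⟩ := D.hok
    refine ⟨fun i => KS.tr (D.pl i), KS.packing_tr D.hpack, KS.gs_tr D.hgs,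
      fun j => KS.tr (D.cont j), fun j => KS.swapLab (D.lab j), D.asg,
      ?_, ?_, ?_, ?_, ?_, ?_, ?_, ?_⟩
    · intro j hj
      simpa using D.hlabok j hj
    · intro j hj
      exact KS.subrect_tr (D.hcsub j hj)
    · intro j hj j' hj' hne
      exact KS.disjoint_tr (D.hcdisj j hj j' hj' hne)
    · intro i hi
      exact ⟨(D.hasg i hi).1, KS.subrect_tr (D.hasg i hi).2⟩
    · intro j hj hlab i hi i' hi' ha ha'
      exact h1 j hj (KS.swapLab_eq_large.mp hlab) i hi i' hi' ha ha'
    · intro j hj hlab i hi i' hi' ha ha' hne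
      exact h3 j hj (KS.swapLab_eq_horizontal.mp hlab) i hi i' hi' ha ha' hne
    · intro j hj hlab i hi i' hi' ha ha' hne
      exact h2 j hj (KS.swapLab_eq_vertical.mp hlab) i hi i' hi' ha ha' hne
    · intro j hj hlab i hi ha
      exact absurd (KS.swapLab_eq_area.mp hlab) (D.hlabok j hj)
end

section
/- (NFDH with guillotine property) Let 0 < ε < 1/2, let [0,N]×[0,N] be a knapsack, and let I be a finite set of small items, i.e., every i ∈ I has w(i) ≤ εN and h(i) ≤ εN. Then there exists a subset I' ⊆ I with total area a(I') ≥ min{a(I), (1−2ε)·N²} that admits a 2-stage guillotine-separable packing into the knapsack. -/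
namespace NFDH
variable {ι : Type*}

noncomputable def fillShelf (N : ℝ) (wd : ι → ℝ) : ℝ → List ι → List (ι × ℝ) × List ι
  | _, [] => ([], [])
  | x, i :: t =>
    if x + wd i ≤ N then
      ((i, x) :: (fillShelf N wd (x + wd i) t).1, (fillShelf N wd (x + wd i) t).2)
    else ([], i :: t)

theorem fillShelf_append (N : ℝ) (wd : ι → ℝ) :
    ∀ (l : List ι) (x : ℝ),
      ((fillShelf N wd x l).1.map Prod.fst) ++ (fillShelf N wd x l).2 = l
  | [], x => by simp [fillShelf]
  | i :: t, x => by
    rw [fillShelf]; split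
    · simpa using fillShelf_append N wd t (x + wd i)
    · simp

theorem fillShelf_length (N : ℝ) (wd : ι → ℝ) (l : List ι) (x : ℝ) :
    (fillShelf N wd x l).2.length ≤ l.length := by
  conv_rhs => rw [← fillShelf_append N wd l x]
  simp

theorem fillShelf_rest_sublist (N : ℝ) (wd : ι → ℝ) (l : List ι) (x : ℝ) :
    (fillShelf N wd x l).2.Sublist l := by
  conv_rhs => rw [← fillShelf_append N wd l x]
  exact List.sublist_append_right _ _

theorem fillShelf_fst_mem (N : ℝ) (wd : ι → ℝ) (l : List ι) (x : ℝ)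
    {a : ι × ℝ} (ha : a ∈ (fillShelf N wd x l).1) : a.1 ∈ l := by
  rw [← fillShelf_append N wd l x]
  exact List.mem_append_left _ (List.mem_map_of_mem ha)

theorem fillShelf_bounds (N : ℝ) (wd : ι → ℝ) :
    ∀ (l : List ι) (x : ℝ), (∀ i ∈ l, 0 < wd i) →
      ∀ a ∈ (fillShelf N wd x l).1, x ≤ a.2 ∧ a.2 + wd a.1 ≤ N
  | [], x, _ => by simp [fillShelf]
  | i :: t, x, hw => by
    rw [fillShelf]
    split
    · rename_i h
      intro a ha
      rcases List.mem_cons.mp ha with rfl | ha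
      · exact ⟨le_refl _, h⟩
      · have h2 := fillShelf_bounds N wd t (x + wd i)
          (fun j hj => hw j (List.mem_cons_of_mem _ hj)) a ha
        have hwi : 0 < wd i := hw i (List.mem_cons_self)
        exact ⟨by linarith [h2.1], h2.2⟩
    · simp

theorem fillShelf_pairwise (N : ℝ) (wd : ι → ℝ) :
    ∀ (l : List ι) (x : ℝ), (∀ i ∈ l, 0 < wd i) →
      (fillShelf N wd x l).1.Pairwise (fun a b => a.2 + wd a.1 ≤ b.2)
  | [], x, _ => by simp [fillShelf]
  | i :: t, x, hw => by
    rw [fillShelf]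
    split
    · rename_i h
      refine List.pairwise_cons.mpr ⟨?_, fillShelf_pairwise N wd t (x + wd i)
        (fun j hj => hw j (List.mem_cons_of_mem _ hj))⟩
      intro b hb
      exact (fillShelf_bounds N wd t (x + wd i)
        (fun j hj => hw j (List.mem_cons_of_mem _ hj)) b hb).1
    · simp

theorem fillShelf_width (N : ℝ) (wd : ι → ℝ) :
    ∀ (l : List ι) (x : ℝ) (j : ι) (t' : List ι),
      (fillShelf N wd x l).2 = j :: t' →
      N < x + (((fillShelf N wd x l).1.map (fun a => wd a.1)).sum) + wd j
  | [], x, j, t' => by simp [fillShelf]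
  | i :: t, x, j, t' => by
    rw [fillShelf]
    split
    · rename_i h
      intro heq
      have := fillShelf_width N wd t (x + wd i) j t' heq
      simp only [List.map_cons, List.sum_cons]
      linarith
    · rename_i h
      intro heq
      injection heq with h1 _
      subst h1
      simp only [List.map_nil, List.sum_nil]
      push_neg at h
      linarith

noncomputable def packAll (N : ℝ) (wd ht : ι → ℝ) : List ι → ℝ → List (ι × ℝ × ℝ) × List ι
  | [], _ => ([], [])
  | i :: t, y =>
    if ht i ≤ N - y then
      ((i, (0, y)) ::
        (((fillShelf N wd (wd i) t).1.map fun a => (a.1, (a.2, y))) ++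
          (packAll N wd ht (fillShelf N wd (wd i) t).2 (y + ht i)).1),
        (packAll N wd ht (fillShelf N wd (wd i) t).2 (y + ht i)).2)
    else ([], i :: t)
  termination_by l _ => l.length
  decreasing_by
    exact Nat.lt_succ_of_le (fillShelf_length N wd t (wd i))

theorem packAll_append (N : ℝ) (wd ht : ι → ℝ) (l : List ι) (y : ℝ) :
    ((packAll N wd ht l y).1.map Prod.fst) ++ (packAll N wd ht l y).2 = l := by
  induction l, y using NFDH.packAll.induct N wd ht with
  | case1 y => simp [packAll]
  | case2 i t y h ih =>
    rw [packAll]; rw [if_pos h]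
    simp only [List.map_cons, List.map_append, List.map_map, List.cons_append, List.append_assoc]
    rw [ih]
    have hc : (Prod.fst ∘ fun a : ι × ℝ => ((a.1 : ι), ((a.2 : ℝ), y))) = Prod.fst :=
      funext fun a => rfl
    rw [hc, fillShelf_append N wd t (wd i)]
  | case3 i t y h => rw [packAll]; rw [if_neg h]; simp

theorem packAll_fst_mem (N : ℝ) (wd ht : ι → ℝ) (l : List ι) (y : ℝ)
    {e : ι × ℝ × ℝ} (he : e ∈ (packAll N wd ht l y).1) : e.1 ∈ l := by
  rw [← packAll_append N wd ht l y]
  exact List.mem_append_left _ (List.mem_map_of_mem he)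

theorem packAll_bounds (N : ℝ) (wd ht : ι → ℝ) (l : List ι) (y : ℝ) :
    (∀ i ∈ l, 0 < wd i) → (∀ i ∈ l, wd i ≤ N) → (∀ i ∈ l, 0 < ht i) →
    (l.Pairwise fun a b => ht b ≤ ht a) →
    ∀ e ∈ (packAll N wd ht l y).1,
      0 ≤ e.2.1 ∧ e.2.1 + wd e.1 ≤ N ∧ y ≤ e.2.2 ∧ e.2.2 + ht e.1 ≤ N := by
  induction l, y using NFDH.packAll.induct N wd ht with
  | case1 y => simp [packAll]
  | case2 i t y h ih =>
    intro hw hwN hh hsort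
    have hwt : ∀ j ∈ t, 0 < wd j := fun j hj => hw j (List.mem_cons_of_mem _ hj)
    have hrs := fillShelf_rest_sublist N wd t (wd i)
    have ih' := ih (fun j hj => hw j (List.mem_cons_of_mem _ (hrs.mem hj)))
      (fun j hj => hwN j (List.mem_cons_of_mem _ (hrs.mem hj)))
      (fun j hj => hh j (List.mem_cons_of_mem _ (hrs.mem hj)))
      ((List.pairwise_cons.mp hsort).2.sublist hrs)
    rw [packAll, if_pos h]
    intro e he
    rcases List.mem_cons.mp he with rfl | he
    · refine ⟨le_refl _, by simpa using hwN i (List.mem_cons_self), le_refl _, by linarith⟩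
    rcases List.mem_append.mp he with he | he
    · obtain ⟨a, ha, rfl⟩ := List.mem_map.mp he
      have hb := fillShelf_bounds N wd t (wd i) hwt a ha
      have hwi : 0 < wd i := hw i (List.mem_cons_self)
      have hts : ht a.1 ≤ ht i :=
        (List.pairwise_cons.mp hsort).1 a.1 (fillShelf_fst_mem N wd t (wd i) ha)
      exact ⟨by linarith [hb.1], hb.2, le_refl _, by linarith⟩
    · have hb := ih' e he
      have hi : 0 < ht i := hh i (List.mem_cons_self)
      exact ⟨hb.1, hb.2.1, by linarith [hb.2.2.1], hb.2.2.2⟩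
  | case3 i t y h => intro _ _ _ _; rw [packAll, if_neg h]; simp

theorem packAll_pairwise (N : ℝ) (wd ht : ι → ℝ) (l : List ι) (y : ℝ) :
    (∀ i ∈ l, 0 < wd i) → (∀ i ∈ l, wd i ≤ N) → (∀ i ∈ l, 0 < ht i) →
    (l.Pairwise fun a b => ht b ≤ ht a) →
    (packAll N wd ht l y).1.Pairwise
      (fun e f => e.2.2 + ht e.1 ≤ f.2.2 ∨ (e.2.2 = f.2.2 ∧ e.2.1 + wd e.1 ≤ f.2.1)) := by
  induction l, y using NFDH.packAll.induct N wd ht with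
  | case1 y => simp [packAll]
  | case2 i t y h ih =>
    intro hw hwN hh hsort
    have hwt : ∀ j ∈ t, 0 < wd j := fun j hj => hw j (List.mem_cons_of_mem _ hj)
    have hrs := fillShelf_rest_sublist N wd t (wd i)
    have hw2 := fun j hj => hw j (List.mem_cons_of_mem _ (hrs.mem hj))
    have hwN2 := fun j hj => hwN j (List.mem_cons_of_mem _ (hrs.mem hj))
    have hh2 := fun j hj => hh j (List.mem_cons_of_mem _ (hrs.mem hj))
    have hsort2 := (List.pairwise_cons.mp hsort).2.sublist hrs
    have hrecb := packAll_bounds N wd ht (fillShelf N wd (wd i) t).2 (y + ht i)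
      hw2 hwN2 hh2 hsort2
    rw [packAll, if_pos h]
    refine List.pairwise_cons.mpr ⟨?_, List.pairwise_append.mpr ⟨?_, ?_, ?_⟩⟩
    · intro f hf
      rcases List.mem_append.mp hf with hf | hf
      · obtain ⟨a, ha, rfl⟩ := List.mem_map.mp hf
        exact Or.inr ⟨rfl, by simpa using (fillShelf_bounds N wd t (wd i) hwt a ha).1⟩
      · exact Or.inl (by simpa using (hrecb _ hf).2.2.1)
    · refine (List.pairwise_map.mpr ?_)
      exact (fillShelf_pairwise N wd t (wd i) hwt).imp (fun hab => Or.inr ⟨rfl, hab⟩)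
    · exact ih hw2 hwN2 hh2 hsort2
    · intro a ha f hf
      obtain ⟨a', ha', rfl⟩ := List.mem_map.mp ha
      have hts : ht a'.1 ≤ ht i :=
        (List.pairwise_cons.mp hsort).1 a'.1 (fillShelf_fst_mem N wd t (wd i) ha')
      exact Or.inl (by simpa using le_trans (by linarith) (hrecb _ hf).2.2.1)
  | case3 i t y h => intro _ _ _ _; rw [packAll, if_neg h]; simp

theorem packAll_area (N : ℝ) (wd ht : ι → ℝ) (W : ℝ) (hW : 0 ≤ W)
    (l : List ι) (y : ℝ) :
    (∀ i ∈ l, 0 < wd i) → (∀ i ∈ l, wd i ≤ N - W) → (∀ i ∈ l, 0 < ht i) →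
    (l.Pairwise fun a b => ht b ≤ ht a) →
    ∀ i0 t0 j t', l = i0 :: t0 → (packAll N wd ht l y).2 = j :: t' →
      W * (N - y - ht i0) ≤ ((packAll N wd ht l y).1.map (fun e => wd e.1 * ht e.1)).sum := by
  induction l, y using NFDH.packAll.induct N wd ht with
  | case1 y => intro _ _ _ _ i0 t0 j t' hl; exact absurd hl (by simp)
  | case2 i t y h ih =>
    intro hw hwNW hh hsort i0 t0 j t' hl heq
    injection hl with hl1 hl2; subst hl1; subst hl2
    have hwt : ∀ j ∈ t, 0 < wd j := fun j hj => hw j (List.mem_cons_of_mem _ hj)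
    have hrs := fillShelf_rest_sublist N wd t (wd i)
    rw [packAll, if_pos h] at heq ⊢
    -- the rest of the shelf is nonempty
    obtain ⟨j0, t0', hs2⟩ : ∃ j0 t0', (fillShelf N wd (wd i) t).2 = j0 :: t0' := by
      rcases hq : (fillShelf N wd (wd i) t).2 with _ | ⟨j0, t0'⟩
      · exfalso; rw [hq] at heq; rw [packAll] at heq; simp at heq
      · exact ⟨j0, t0', rfl⟩
    have hj0t : j0 ∈ t := hrs.mem (hs2 ▸ List.mem_cons_self)
    have ihr := ih (fun a ha => hw a (List.mem_cons_of_mem _ (hrs.mem ha)))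
      (fun a ha => hwNW a (List.mem_cons_of_mem _ (hrs.mem ha)))
      (fun a ha => hh a (List.mem_cons_of_mem _ (hrs.mem ha)))
      ((List.pairwise_cons.mp hsort).2.sublist hrs) j0 t0' j t' hs2 heq
    -- shelf width bound
    have hwidth := fillShelf_width N wd t (wd i) j0 t0' hs2
    have hj0W : wd j0 ≤ N - W := hwNW j0 (List.mem_cons_of_mem _ hj0t)
    have hj0pos : 0 < ht j0 := hh j0 (List.mem_cons_of_mem _ hj0t)
    have hj0i : ht j0 ≤ ht i := (List.pairwise_cons.mp hsort).1 j0 hj0t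
    -- heights of shelf items dominate ht j0
    have hshelfht : ∀ a ∈ (fillShelf N wd (wd i) t).1, ht j0 ≤ ht a.1 := by
      intro a ha
      have hsplit := List.pairwise_append.mp
        ((fillShelf_append N wd t (wd i)) ▸ (List.pairwise_cons.mp hsort).2)
      exact hsplit.2.2 a.1 (List.mem_map_of_mem ha) j0 (hs2 ▸ List.mem_cons_self)
    -- shelf area bound
    have harea : W * ht j0 ≤ wd i * ht i +
        (((fillShelf N wd (wd i) t).1.map fun a => wd a.1 * ht a.1)).sum := by
      have h1 : (((fillShelf N wd (wd i) t).1.map fun a => wd a.1 * ht j0)).sum ≤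
          (((fillShelf N wd (wd i) t).1.map fun a => wd a.1 * ht a.1)).sum := by
        apply List.sum_le_sum
        intro a ha
        exact mul_le_mul_of_nonneg_left (hshelfht a ha)
          (le_of_lt (hwt a.1 (fillShelf_fst_mem N wd t (wd i) ha)))
      have h2 : (((fillShelf N wd (wd i) t).1.map fun a => wd a.1 * ht j0)).sum =
          (((fillShelf N wd (wd i) t).1.map fun a => wd a.1)).sum * ht j0 := by
        rw [← List.sum_map_mul_right]
      have h3 : W ≤ wd i + (((fillShelf N wd (wd i) t).1.map fun a => wd a.1)).sum := by
        linarith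
      have h4 : W * ht j0 ≤
          (wd i + (((fillShelf N wd (wd i) t).1.map fun a => wd a.1)).sum) * ht j0 :=
        mul_le_mul_of_nonneg_right h3 (le_of_lt hj0pos)
      have h5 : wd i * ht j0 ≤ wd i * ht i :=
        mul_le_mul_of_nonneg_left hj0i (le_of_lt (hw i (List.mem_cons_self)))
      nlinarith
    have hkey : W * (N - y - ht i) = W * (N - (y + ht i) - ht j0) + W * ht j0 := by ring
    simp only [List.map_cons, List.map_append, List.map_map, List.sum_cons, List.sum_append]
    have hmm : ((List.map ((fun e : ι × ℝ × ℝ => wd e.1 * ht e.1) ∘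
        fun a : ι × ℝ => (a.1, a.2, y)) (fillShelf N wd (wd i) t).1)).sum =
        (((fillShelf N wd (wd i) t).1.map fun a => wd a.1 * ht a.1)).sum := rfl
    rw [hmm]
    linarith
  | case3 i t y h =>
    intro hw hwNW hh hsort i0 t0 j t' hl heq
    injection hl with hl1 hl2; subst hl1; subst hl2
    rw [packAll, if_neg h]
    simp only [List.map_nil, List.sum_nil]
    push_neg at h
    have : N - y - ht i ≤ 0 := by linarith
    exact mul_nonpos_of_nonneg_of_nonpos hW this


open Classical in
/-- Placement lookup from an association list of placed items. -/
noncomputable def placeOf (wd ht : ι → ℝ) : List (ι × ℝ × ℝ) → ι → Rect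
  | [], _ => ⟨0, 0, 0, 0⟩
  | e :: t, i =>
    if e.1 = i then ⟨e.2.1, e.2.1 + wd i, e.2.2, e.2.2 + ht i⟩ else placeOf wd ht t i

theorem placeOf_eq (wd ht : ι → ℝ) :
    ∀ (out : List (ι × ℝ × ℝ)), (out.map Prod.fst).Nodup →
      ∀ e ∈ out, placeOf wd ht out e.1 = ⟨e.2.1, e.2.1 + wd e.1, e.2.2, e.2.2 + ht e.1⟩
  | [], _, e, he => absurd he (by simp)
  | f :: t, hnd, e, he => by
    rw [placeOf]
    rcases List.mem_cons.mp he with rfl | he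
    · rw [if_pos rfl]
    · have hne : f.1 ≠ e.1 := by
        intro hfe
        have : e.1 ∈ t.map Prod.fst := List.mem_map_of_mem he
        rw [List.map_cons] at hnd
        exact (List.nodup_cons.mp hnd).1 (hfe ▸ this)
      rw [if_neg hne]
      exact placeOf_eq wd ht t (List.nodup_cons.mp (List.map_cons (f := Prod.fst) (a := f) (l := t) ▸ hnd)).2 e he

/-- Vertical separation of a shelf: one stage of vertical cuts. -/
theorem stage_shelf [DecidableEq ι] (place : ι → Rect) :
    ∀ (L : List ι) (P : Rect),
      (L.Pairwise fun a b => (place a).x2 ≤ (place b).x1) →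
      (∀ i ∈ L, P.x1 ≤ (place i).x1 ∧ (place i).x2 ≤ P.x2 ∧ (place i).x1 < (place i).x2) →
      StageSep place 1 true P L.toFinset
  | [], P, _, _ => StageSep.base _ _ _ _ (by simp)
  | [i], P, _, _ => StageSep.base _ _ _ _ (by simp)
  | i :: j :: t, P, hpair, hin => by
    have hpc := List.pairwise_cons.mp hpair
    have hini := hin i (List.mem_cons_self)
    have hinj := hin j (by simp)
    have hij : (place i).x2 ≤ (place j).x1 := hpc.1 j (by simp)
    refine StageSep.vcut 0 P _ ((place i).x2) ?_ ?_ ?_ ?_ ?_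
    · exact lt_of_le_of_lt hini.1 hini.2.2
    · exact lt_of_le_of_lt hij (lt_of_lt_of_le hinj.2.2 hinj.2.1)
    · intro k hk
      rcases List.mem_cons.mp (List.mem_toFinset.mp hk) with rfl | hk
      · exact Or.inl (le_refl _)
      · exact Or.inr (hpc.1 k hk)
    · apply StageSep.base
      have hsub : ((i :: j :: t).toFinset.filter fun k => (place k).x2 ≤ (place i).x2)
          ⊆ {i} := by
        intro k hk
        obtain ⟨hk1, hk2⟩ := Finset.mem_filter.mp hk
        rcases List.mem_cons.mp (List.mem_toFinset.mp hk1) with rfl | hk1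
        · exact Finset.mem_singleton_self _
        · exfalso
          have h1 : (place i).x2 ≤ (place k).x1 := hpc.1 k hk1
          have h2 := hin k (List.mem_cons_of_mem _ hk1)
          linarith [h2.2.2]
      exact le_trans (Finset.card_le_card hsub) (by simp)
    · have hfe : ((i :: j :: t).toFinset.filter fun k => ¬ (place k).x2 ≤ (place i).x2)
          = (j :: t).toFinset := by
        ext k
        simp only [Finset.mem_filter, List.mem_toFinset, List.mem_cons, not_le]
        constructor
        · rintro ⟨rfl | hk, h2⟩
          · exact absurd h2 (lt_irrefl _)
          · exact hk
        · intro hk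
          refine ⟨Or.inr hk, ?_⟩
          have hk' : k ∈ j :: t := List.mem_cons.mpr hk
          have h1 : (place i).x2 ≤ (place k).x1 := hpc.1 k hk'
          have h2 := hin k (List.mem_cons_of_mem _ hk')
          linarith [h2.2.2]
      rw [hfe]
      refine stage_shelf place (j :: t) _ hpc.2 ?_
      intro k hk
      have h2 := hin k (List.mem_cons_of_mem _ hk)
      exact ⟨hpc.1 k hk, h2.2.1, h2.2.2⟩

theorem stage_packAll [DecidableEq ι] (N : ℝ) (wd ht : ι → ℝ) (place : ι → Rect)
    (l : List ι) (y : ℝ) :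
    (∀ i ∈ l, 0 < wd i) → (∀ i ∈ l, wd i ≤ N) → (∀ i ∈ l, 0 < ht i) →
    (l.Pairwise fun a b => ht b ≤ ht a) →
    (∀ e ∈ (packAll N wd ht l y).1,
        place e.1 = ⟨e.2.1, e.2.1 + wd e.1, e.2.2, e.2.2 + ht e.1⟩) →
    StageSep place 2 false ⟨0, N, y, N⟩ ((packAll N wd ht l y).1.map Prod.fst).toFinset := by
  induction l, y using NFDH.packAll.induct N wd ht with
  | case1 y =>
    intro _ _ _ _ _
    rw [packAll]
    exact StageSep.base _ _ _ _ (by simp)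
  | case3 i t y h =>
    intro _ _ _ _ _
    rw [packAll, if_neg h]
    exact StageSep.base _ _ _ _ (by simp)
  | case2 i t y h ih =>
    intro hw hwN hh hsort hplace
    have hwt : ∀ j ∈ t, 0 < wd j := fun j hj => hw j (List.mem_cons_of_mem _ hj)
    have hrs := fillShelf_rest_sublist N wd t (wd i)
    have hw2 := fun j hj => hw j (List.mem_cons_of_mem _ (hrs.mem hj))
    have hwN2 := fun j hj => hwN j (List.mem_cons_of_mem _ (hrs.mem hj))
    have hh2 := fun j hj => hh j (List.mem_cons_of_mem _ (hrs.mem hj))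
    have hsort2 := (List.pairwise_cons.mp hsort).2.sublist hrs
    have hhi : 0 < ht i := hh i (List.mem_cons_self)
    have hwi : 0 < wd i := hw i (List.mem_cons_self)
    rw [packAll, if_pos h] at hplace ⊢
    have hplhead : place i = ⟨0, 0 + wd i, y, y + ht i⟩ := hplace _ (List.mem_cons_self)
    have hplshelf : ∀ a ∈ (fillShelf N wd (wd i) t).1,
        place a.1 = ⟨a.2, a.2 + wd a.1, y, y + ht a.1⟩ := fun a ha =>
      hplace _ (List.mem_cons_of_mem _ (List.mem_append_left _ (List.mem_map_of_mem ha)))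
    have hplq : ∀ e ∈ (packAll N wd ht (fillShelf N wd (wd i) t).2 (y + ht i)).1,
        place e.1 = ⟨e.2.1, e.2.1 + wd e.1, e.2.2, e.2.2 + ht e.1⟩ := fun e he =>
      hplace _ (List.mem_cons_of_mem _ (List.mem_append_right _ he))
    have hqb := packAll_bounds N wd ht (fillShelf N wd (wd i) t).2 (y + ht i)
      hw2 hwN2 hh2 hsort2
    -- one stage of vertical cuts separates the shelf in any strip of the right height
    have hshelfsep : ∀ Y2 : ℝ, StageSep place 1 true ⟨0, N, y, Y2⟩
        ((i :: (fillShelf N wd (wd i) t).1.map Prod.fst).toFinset) := by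
      intro Y2
      apply stage_shelf
      · refine List.pairwise_cons.mpr ⟨?_, ?_⟩
        · intro b hb
          obtain ⟨a, ha, rfl⟩ := List.mem_map.mp hb
          rw [hplhead, hplshelf a ha]
          simpa using (fillShelf_bounds N wd t (wd i) hwt a ha).1
        · rw [List.pairwise_map]
          refine List.Pairwise.imp_of_mem ?_ (fillShelf_pairwise N wd t (wd i) hwt)
          intro a b ha hb hab
          rw [hplshelf a ha, hplshelf b hb]
          exact hab
      · intro k hk
        rcases List.mem_cons.mp hk with rfl | hk
        · rw [hplhead]
          exact ⟨le_refl _, by simpa using hwN k (List.mem_cons_self), by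
            simpa using hwi⟩
        · obtain ⟨a, ha, rfl⟩ := List.mem_map.mp hk
          rw [hplshelf a ha]
          have hb := fillShelf_bounds N wd t (wd i) hwt a ha
          have hwa : 0 < wd a.1 := hwt a.1 (fillShelf_fst_mem N wd t (wd i) ha)
          exact ⟨by simp; linarith [hb.1], hb.2, by simp; linarith⟩
    have hc : (Prod.fst ∘ fun a : ι × ℝ => ((a.1 : ι), ((a.2 : ℝ), y))) = Prod.fst :=
      funext fun a => rfl
    by_cases hqe : (packAll N wd ht (fillShelf N wd (wd i) t).2 (y + ht i)).1 = []
    · -- single shelf: skip the horizontal stage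
      rw [hqe]
      simp only [List.append_nil, List.map_cons, List.map_map, hc]
      exact StageSep.skip 1 true _ _ (hshelfsep N)
    · -- at least two shelves: horizontal cut at y + ht i
      obtain ⟨f0, qt, hq1⟩ := List.exists_cons_of_ne_nil hqe
      have hf0mem : f0 ∈ (packAll N wd ht (fillShelf N wd (wd i) t).2 (y + ht i)).1 := by
        rw [hq1]; exact List.mem_cons_self
      have hf0 := hqb f0 hf0mem
      have hf0pos : 0 < ht f0.1 :=
        hh2 f0.1 (packAll_fst_mem N wd ht _ _ hf0mem)
      have hcN : y + ht i < N := by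
        have := hf0.2.2.1
        have := hf0.2.2.2
        linarith
      refine StageSep.hcut 1 ⟨0, N, y, N⟩ _ (y + ht i) (by simp; linarith) hcN ?_ ?_ ?_
      · -- hcross
        intro k hk
        obtain ⟨e, he, rfl⟩ := List.mem_map.mp (List.mem_toFinset.mp hk)
        rcases List.mem_cons.mp he with rfl | he
        · exact Or.inl (by rw [hplhead])
        rcases List.mem_append.mp he with he | he
        · obtain ⟨a, ha, rfl⟩ := List.mem_map.mp he
          rw [hplshelf a ha]
          have hts : ht a.1 ≤ ht i :=
            (List.pairwise_cons.mp hsort).1 a.1 (fillShelf_fst_mem N wd t (wd i) ha)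
          exact Or.inl (by simp; linarith)
        · rw [hplq e he]
          exact Or.inr (hqb e he).2.2.1
      · -- bottom piece: the first shelf
        have heqB : ((((i, ((0:ℝ), y)) ::
            (((fillShelf N wd (wd i) t).1.map fun a => (a.1, (a.2, y))) ++
              (packAll N wd ht (fillShelf N wd (wd i) t).2 (y + ht i)).1)).map
                Prod.fst).toFinset.filter fun k => (place k).y2 ≤ y + ht i)
            = (i :: (fillShelf N wd (wd i) t).1.map Prod.fst).toFinset := by
          ext k
          simp only [Finset.mem_filter, List.mem_toFinset]
          constructor
          · rintro ⟨hk1, hk2⟩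
            obtain ⟨e, he, rfl⟩ := List.mem_map.mp hk1
            rcases List.mem_cons.mp he with rfl | he
            · exact List.mem_cons_self
            rcases List.mem_append.mp he with he | he
            · obtain ⟨a, ha, rfl⟩ := List.mem_map.mp he
              exact List.mem_cons_of_mem _ (List.mem_map_of_mem ha)
            · exfalso
              rw [hplq e he] at hk2
              have h1 := (hqb e he).2.2.1
              have h2 : 0 < ht e.1 := hh2 e.1 (packAll_fst_mem N wd ht _ _ he)
              simp at hk2
              linarith
          · intro hk
            rcases List.mem_cons.mp hk with rfl | hk
            · refine ⟨List.mem_map.mpr ⟨(k, ((0:ℝ), y)), List.mem_cons_self, rfl⟩, ?_⟩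
              rw [hplhead]
            · obtain ⟨a, ha, rfl⟩ := List.mem_map.mp hk
              refine ⟨List.mem_map.mpr ⟨(a.1, (a.2, y)), List.mem_cons_of_mem _
                (List.mem_append_left _ (List.mem_map_of_mem ha)), rfl⟩, ?_⟩
              rw [hplshelf a ha]
              have hts : ht a.1 ≤ ht i :=
                (List.pairwise_cons.mp hsort).1 a.1 (fillShelf_fst_mem N wd t (wd i) ha)
              simp; linarith
        rw [heqB]
        exact StageSep.skip 1 true _ _ (hshelfsep (y + ht i))
      · -- top piece: the remaining shelves
        have heqT : ((((i, ((0:ℝ), y)) ::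
            (((fillShelf N wd (wd i) t).1.map fun a => (a.1, (a.2, y))) ++
              (packAll N wd ht (fillShelf N wd (wd i) t).2 (y + ht i)).1)).map
                Prod.fst).toFinset.filter fun k => ¬ (place k).y2 ≤ y + ht i)
            = (((packAll N wd ht (fillShelf N wd (wd i) t).2 (y + ht i)).1.map
                Prod.fst).toFinset) := by
          ext k
          simp only [Finset.mem_filter, List.mem_toFinset]
          constructor
          · rintro ⟨hk1, hk2⟩
            obtain ⟨e, he, rfl⟩ := List.mem_map.mp hk1
            rcases List.mem_cons.mp he with rfl | he
            · exact absurd (by rw [hplhead] : (place (i, ((0:ℝ), y)).1).y2 ≤ y + ht i) hk2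
            rcases List.mem_append.mp he with he | he
            · exfalso
              obtain ⟨a, ha, rfl⟩ := List.mem_map.mp he
              rw [hplshelf a ha] at hk2
              have hts : ht a.1 ≤ ht i :=
                (List.pairwise_cons.mp hsort).1 a.1 (fillShelf_fst_mem N wd t (wd i) ha)
              exact hk2 (by simp; linarith)
            · exact List.mem_map_of_mem he
          · intro hk
            obtain ⟨e, he, rfl⟩ := List.mem_map.mp hk
            refine ⟨List.mem_map.mpr ⟨e, List.mem_cons_of_mem _
              (List.mem_append_right _ he), rfl⟩, ?_⟩
            rw [hplq e he]
            have h1 := (hqb e he).2.2.1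
            have h2 : 0 < ht e.1 := hh2 e.1 (packAll_fst_mem N wd ht _ _ he)
            simp; linarith
        rw [heqT]
        exact ih hw2 hwN2 hh2 hsort2 hplq

end NFDH

/-- **NFDH with the guillotine property.** For `0 < ε < 1/2` and a
finite set of small items (each of width and height at most `ε·N`), some subset of
total area at least `min{a(I), (1 - 2ε)·N²}` admits a 2-stage guillotine-separable
packing into the `N × N` knapsack. -/
theorem NFDH_two_stage
    {ι : Type*} (N ε : ℝ) (hN : 0 < N) (hε : 0 < ε) (hε' : ε < 1 / 2)
    (wd ht : ι → ℝ) (I : Finset ι)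
    (hpos : ∀ i ∈ I, 0 < wd i ∧ 0 < ht i)
    (hsmall : ∀ i ∈ I, wd i ≤ ε * N ∧ ht i ≤ ε * N) :
    ∃ I' ⊆ I,
      min (∑ i ∈ I, wd i * ht i) ((1 - 2 * ε) * N ^ 2) ≤ (∑ i ∈ I', wd i * ht i) ∧
      ∃ place : ι → Rect,
        IsPacking wd ht I' place (knapsack N) ∧
        KStageSep place 2 (knapsack N) I' := by
  classical
  set l : List ι := I.toList.mergeSort (fun a b => decide (ht b ≤ ht a)) with hldef
  have hperm : l.Perm I.toList := List.mergeSort_perm _ _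
  have hmem : ∀ {a : ι}, a ∈ l ↔ a ∈ I := by
    intro a; rw [hperm.mem_iff, Finset.mem_toList]
  have hsort : l.Pairwise (fun a b => ht b ≤ ht a) := by
    have h1 := List.pairwise_mergeSort (le := fun a b : ι => decide (ht b ≤ ht a))
      (fun a b c hab hbc => by
        simp only [decide_eq_true_eq] at *; exact le_trans hbc hab)
      (fun a b => by simp only [Bool.or_eq_true, decide_eq_true_eq]; exact le_total _ _)
      I.toList
    exact h1.imp (by simp)
  have hnd : l.Nodup := hperm.nodup_iff.mpr I.nodup_toList
  have hw : ∀ i ∈ l, 0 < wd i := fun i hi => (hpos i (hmem.mp hi)).1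
  have hhp : ∀ i ∈ l, 0 < ht i := fun i hi => (hpos i (hmem.mp hi)).2
  have hsmw : ∀ i ∈ l, wd i ≤ ε * N := fun i hi => (hsmall i (hmem.mp hi)).1
  have hsmh : ∀ i ∈ l, ht i ≤ ε * N := fun i hi => (hsmall i (hmem.mp hi)).2
  have hwN : ∀ i ∈ l, wd i ≤ N := fun i hi => le_trans (hsmw i hi) (by nlinarith)
  have happ := NFDH.packAll_append N wd ht l 0
  have hndout : ((NFDH.packAll N wd ht l 0).1.map Prod.fst).Nodup := by
    rw [← happ] at hnd
    exact hnd.of_append_left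
  have hbounds := NFDH.packAll_bounds N wd ht l 0 hw hwN hhp hsort
  have hpairw := NFDH.packAll_pairwise N wd ht l 0 hw hwN hhp hsort
  set place : ι → Rect := NFDH.placeOf wd ht (NFDH.packAll N wd ht l 0).1 with hpl
  have hplace : ∀ e ∈ (NFDH.packAll N wd ht l 0).1,
      place e.1 = ⟨e.2.1, e.2.1 + wd e.1, e.2.2, e.2.2 + ht e.1⟩ :=
    NFDH.placeOf_eq wd ht _ hndout
  refine ⟨((NFDH.packAll N wd ht l 0).1.map Prod.fst).toFinset, ?_, ?_, place, ?_, ?_⟩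
  · -- subset
    intro k hk
    obtain ⟨e, he, rfl⟩ := List.mem_map.mp (List.mem_toFinset.mp hk)
    exact hmem.mp (NFDH.packAll_fst_mem N wd ht _ _ he)
  · -- area bound
    have hsum : (∑ i ∈ ((NFDH.packAll N wd ht l 0).1.map Prod.fst).toFinset, wd i * ht i)
        = ((NFDH.packAll N wd ht l 0).1.map (fun e => wd e.1 * ht e.1)).sum := by
      rw [List.sum_toFinset _ hndout, List.map_map]
      rfl
    rcases hrest : (NFDH.packAll N wd ht l 0).2 with _ | ⟨j, t'⟩
    · -- everything is packed
      have hfull : (NFDH.packAll N wd ht l 0).1.map Prod.fst = l := by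
        have h0 := happ
        rw [hrest, List.append_nil] at h0
        exact h0
      have hIeq : ((NFDH.packAll N wd ht l 0).1.map Prod.fst).toFinset = I := by
        ext k
        rw [hfull, List.mem_toFinset]
        exact hmem
      rw [hIeq]
      exact min_le_left _ _
    · -- an item was rejected: area at least (1-2ε)N²
      have hlne : l ≠ [] := by
        intro h0
        rw [h0] at hrest
        rw [NFDH.packAll] at hrest
        simp at hrest
      obtain ⟨i0, t0, hl0⟩ := List.exists_cons_of_ne_nil hlne
      have hW : (0:ℝ) ≤ (1 - ε) * N := by nlinarith
      have hwNW : ∀ i ∈ l, wd i ≤ N - (1 - ε) * N := by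
        intro i hi
        have := hsmw i hi
        nlinarith
      have harea := NFDH.packAll_area N wd ht ((1 - ε) * N) hW l 0 hw hwNW hhp hsort
        i0 t0 j t' hl0 hrest
      have hi0 : ht i0 ≤ ε * N := hsmh i0 (hl0 ▸ List.mem_cons_self)
      have hmin : (1 - 2 * ε) * N ^ 2 ≤ (1 - ε) * N * (N - 0 - ht i0) := by
        nlinarith [mul_nonneg hW (by linarith : (0:ℝ) ≤ ε * N - ht i0), sq_nonneg (ε * N)]
      rw [hsum]
      exact le_trans (min_le_right _ _) (le_trans hmin harea)
  · -- IsPacking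
    have hmemI' : ∀ k ∈ ((NFDH.packAll N wd ht l 0).1.map Prod.fst).toFinset,
        ∃ e ∈ (NFDH.packAll N wd ht l 0).1, e.1 = k := by
      intro k hk
      obtain ⟨e, he, rfl⟩ := List.mem_map.mp (List.mem_toFinset.mp hk)
      exact ⟨e, he, rfl⟩
    refine ⟨?_, ?_, ?_, ?_⟩
    · intro k hk
      obtain ⟨e, he, rfl⟩ := hmemI' k hk
      rw [hplace e he]
      simp [Rect.width]
    · intro k hk
      obtain ⟨e, he, rfl⟩ := hmemI' k hk
      rw [hplace e he]
      simp [Rect.height]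
    · intro k hk
      obtain ⟨e, he, rfl⟩ := hmemI' k hk
      rw [hplace e he]
      have hb := hbounds e he
      exact ⟨hb.1, hb.2.1, hb.2.2.1, hb.2.2.2⟩
    · intro a ha b hb hab
      obtain ⟨e, he, rfl⟩ := hmemI' a ha
      obtain ⟨f, hf, rfl⟩ := hmemI' b hb
      have hef : e ≠ f := fun hh0 => hab (by rw [hh0])
      have hpw : (e.2.2 + ht e.1 ≤ f.2.2 ∨ (e.2.2 = f.2.2 ∧ e.2.1 + wd e.1 ≤ f.2.1)) ∨
          (f.2.2 + ht f.1 ≤ e.2.2 ∨ (f.2.2 = e.2.2 ∧ f.2.1 + wd f.1 ≤ e.2.1)) := by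
        have hsym := hpairw.imp
          (fun {x y} hxy => Or.inl hxy :
            ∀ {x y : ι × ℝ × ℝ}, _ → ((x.2.2 + ht x.1 ≤ y.2.2 ∨
              (x.2.2 = y.2.2 ∧ x.2.1 + wd x.1 ≤ y.2.1)) ∨
              (y.2.2 + ht y.1 ≤ x.2.2 ∨ (y.2.2 = x.2.2 ∧ y.2.1 + wd y.1 ≤ x.2.1))))
        have := @List.Pairwise.forall _ _ _ ⟨fun x y hxy => Or.symm hxy⟩ hsym e he f hf hef
        exact this
      rw [hplace e he, hplace f hf]
      rw [Set.disjoint_left]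
      intro p hp1 hp2
      simp only [Rect.toSet, Set.mem_setOf_eq] at hp1 hp2
      rcases hpw with (h1 | ⟨h1, h2⟩) | (h1 | ⟨h1, h2⟩) <;> [linarith; linarith; linarith; linarith]
  · -- 2-stage guillotine
    exact ⟨false, NFDH.stage_packAll N wd ht place l 0 hw hwN hhp hsort hplace⟩
end
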